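/- arXiv:1909.11823 — 7 statements merged into one kernel-verified Lean document; each statement's English description precedes it below -/
import Mathlib

section
/- The m-channel linear system ε̇ = Ãε + Σ_{j=1}^m B̃_j ṽ_j with outputs ỹ_i = col{Ĉ_i, C̃_i} ε, i = 1,…,m, is jointly controllable and jointly observable; that is, the pair (Ã, [B̃_1 B̃_2 … B̃_m]) is controllable and the pair (col{ col{Ĉ_1,C̃_1}, …, col{Ĉ_m,C̃_m} }, Ã) is observable. -/
open Matrix Finset

/-- The controllability matrix `[B, AB, …, A^{k-1}B]` of the pair `(A, B)`. -/
def ctrbMat {ι κ : Type*} [Fintype ι] [DecidableEq ι]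
    (A : Matrix ι ι ℝ) (B : Matrix ι κ ℝ) (k : ℕ) : Matrix ι (Fin k × κ) ℝ :=
  Matrix.of fun i p => ((A ^ (p.1 : ℕ)) * B) i p.2

/-- `(A, B)` is controllable if its controllability matrix has full rank. -/
def Controllable {ι κ : Type*} [Fintype ι] [DecidableEq ι] [Fintype κ]
    (A : Matrix ι ι ℝ) (B : Matrix ι κ ℝ) : Prop :=
  (ctrbMat A B (Fintype.card ι)).rank = Fintype.card ι

/-- The controllability index: the smallest positive `k` with
`rank [B, AB, …, A^{k-1}B]` full. -/
noncomputable def ctrlIndex {ι κ : Type*} [Fintype ι] [DecidableEq ι] [Fintype κ]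
    (A : Matrix ι ι ℝ) (B : Matrix ι κ ℝ) : ℕ :=
  sInf {k | 0 < k ∧ (ctrbMat A B k).rank = Fintype.card ι}

/-- `(C, A)` is observable iff `(Aᵀ, Cᵀ)` is controllable. -/
def Observable {ι κ : Type*} [Fintype ι] [DecidableEq ι] [Fintype κ]
    (C : Matrix κ ι ℝ) (A : Matrix ι ι ℝ) : Prop :=
  Controllable Aᵀ Cᵀ

/-- `B̃ᵢ = bᵢ ⊗ Iₙ`. -/
def Btil (n : ℕ) {m : ℕ} (i : Fin m) : Matrix (Fin m × Fin n) (Fin n) ℝ :=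
  Matrix.of fun p l => if p.1 = i ∧ p.2 = l then (1 : ℝ) else 0

/-- `Ã = I_m ⊗ (A + Σⱼ BⱼFⱼ) − Q`, where the `(i,j)` block of `Q` is `BⱼFⱼ`. -/
def Atil {n m : ℕ} {mdim : Fin m → ℕ} (A : Matrix (Fin n) (Fin n) ℝ)
    (B : ∀ i : Fin m, Matrix (Fin n) (Fin (mdim i)) ℝ)
    (F : ∀ i : Fin m, Matrix (Fin (mdim i)) (Fin n) ℝ) :
    Matrix (Fin m × Fin n) (Fin m × Fin n) ℝ :=
  Matrix.of fun p p' =>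
    (if p.1 = p'.1 then (A + ∑ j : Fin m, B j * F j) p.2 p'.2 else 0)
      - (B p'.1 * F p'.1) p.2 p'.2

/-- `C̃ᵢ`, the stack of the matrices `C_{ij} = c_{ij} ⊗ Iₙ` over the neighbors
`j ∈ 𝒩ᵢ`, where `c_{ij}` has `+1` in position `i`, `−1` in position `j`
(so `c_{ii} = 0` for the self-loop). -/
def Ctil (n : ℕ) {m : ℕ} (adj : Fin m → Fin m → Prop) [DecidableRel adj] (i : Fin m) :
    Matrix ({j // adj j i} × Fin n) (Fin m × Fin n) ℝ :=
  Matrix.of fun r p =>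
    ((if p.1 = i then (1 : ℝ) else 0) - (if p.1 = (r.1 : Fin m) then 1 else 0))
      * (if r.2 = p.2 then 1 else 0)

/-- `Hᵢ = [H_{ij¹} … H_{ijᵏ}]`, the row block of the matrices `H_{ij}`, `j ∈ 𝒩ᵢ`. -/
def Hblk {n m : ℕ} (adj : Fin m → Fin m → Prop) [DecidableRel adj]
    (H : Fin m → Fin m → Matrix (Fin n) (Fin n) ℝ) (i : Fin m) :
    Matrix (Fin n) ({j // adj j i} × Fin n) ℝ :=
  Matrix.of fun k r => H i (r.1 : Fin m) k r.2

/-!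
The input matrix `[B̃₁ … B̃ₘ]` is the identity, so controllability is immediate.
For observability, let `ε` produce zero output under `Ã`. The rows `C̃ᵢ` give `εᵢ = εⱼ` along
every arc, so by strong connectivity `ε = 𝟙 ⊗ w`. On such consensus vectors the coupling `Q`
cancels `Σⱼ BⱼFⱼ`, i.e. `Ã (𝟙 ⊗ w) = 𝟙 ⊗ A w`, so the rows `Ĉᵢ` give `Cᵢ Aᵏ w = 0` for all
`i, k`, and joint observability of `(C, A)` forces `w = 0`.
-/

theorem Matrix.rank_eq_card_iff_vecMul_eq_zero {ι κ K : Type*} [Fintype ι] [Fintype κ] [Field K]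
    (M : Matrix ι κ K) : M.rank = Fintype.card ι ↔ ∀ x : ι → K, x ᵥ* M = 0 → x = 0 := by
  rw [M.rank_eq_finrank_span_row, ← Set.finrank, eq_comm,
    ← linearIndependent_iff_card_eq_finrank_span, ← Matrix.vecMul_injective_iff,
    ← Matrix.coe_vecMulLinear, injective_iff_map_eq_zero]
  rfl

theorem Relation.ReflTransGen.eq_of_forall_eq {α β : Type*} {r : α → α → Prop} {f : α → β}
    (h : ∀ a b, r a b → f a = f b) {a b : α} (hab : ReflTransGen r a b) : f a = f b := by
  induction hab with
  | refl => rfl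
  | tail _ hbc ih => exact ih.trans (h _ _ hbc)

section ControlTheory

variable {ι κ : Type*} [Fintype ι] [DecidableEq ι] [Fintype κ]

theorem controllable_iff (A : Matrix ι ι ℝ) (B : Matrix ι κ ℝ) :
    Controllable A B ↔
      ∀ x : ι → ℝ, (∀ k < Fintype.card ι, x ᵥ* (A ^ k * B) = 0) → x = 0 := by
  rw [Controllable, rank_eq_card_iff_vecMul_eq_zero]
  refine forall_congr' fun x => imp_congr_left ⟨fun hx k hk => ?_, fun hx => ?_⟩
  · ext j
    simpa [ctrbMat, vecMul, dotProduct] using congrFun hx (⟨k, hk⟩, j)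
  · ext p
    simpa [ctrbMat, vecMul, dotProduct] using congrFun (hx p.1 p.1.isLt) p.2

theorem observable_iff (C : Matrix κ ι ℝ) (A : Matrix ι ι ℝ) :
    Observable C A ↔
      ∀ x : ι → ℝ, (∀ k < Fintype.card ι, C *ᵥ (A ^ k *ᵥ x) = 0) → x = 0 := by
  simp only [Observable, controllable_iff, ← transpose_pow, ← transpose_mul, vecMul_transpose,
    ← mulVec_mulVec]

theorem controllable_one (A : Matrix ι ι ℝ) : Controllable A (1 : Matrix ι ι ℝ) := by
  rw [controllable_iff]
  intro x hx
  cases isEmpty_or_nonempty ι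
  · exact Subsingleton.elim _ _
  · simpa using hx 0 Fintype.card_pos

end ControlTheory

section ErrorSystem

variable {n m : ℕ}

theorem of_Btil_eq_one :
    (Matrix.of fun p p' : Fin m × Fin n => Btil n p'.1 p p'.2) = 1 := by
  ext p p'
  simp [Btil, one_apply, Prod.ext_iff]

theorem Btil_transpose_mulVec (i : Fin m) (z : Fin m × Fin n → ℝ) :
    (Btil n i)ᵀ *ᵥ z = fun t => z (i, t) := by
  ext t
  simp [Btil, mulVec, dotProduct, Fintype.sum_prod_type, ite_and]

theorem Ctil_mulVec (adj : Fin m → Fin m → Prop) [DecidableRel adj] (i : Fin m)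
    (z : Fin m × Fin n → ℝ) :
    Ctil n adj i *ᵥ z = fun r => z (i, r.2) - z (r.1, r.2) := by
  ext r
  simp [Ctil, mulVec, dotProduct, Fintype.sum_prod_type, sub_mul, Finset.sum_sub_distrib]

theorem of_fromRows_Btil_Ctil_mulVec_eq_zero_iff {pdim : Fin m → ℕ}
    (C : ∀ i : Fin m, Matrix (Fin (pdim i)) (Fin n) ℝ)
    (adj : Fin m → Fin m → Prop) [DecidableRel adj] (z : Fin m × Fin n → ℝ) :
    (Matrix.of fun (s : Σ i : Fin m, (Fin (pdim i) ⊕ ({j // adj j i} × Fin n)))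
        (p : Fin m × Fin n) => fromRows (C s.1 * (Btil n s.1)ᵀ) (Ctil n adj s.1) s.2 p) *ᵥ z = 0
      ↔ ∀ i, C i *ᵥ (fun t => z (i, t)) = 0 ∧ ∀ j, adj j i → ∀ t, z (i, t) = z (j, t) := by
  have hrow : ∀ s : Σ i : Fin m, (Fin (pdim i) ⊕ ({j // adj j i} × Fin n)),
      (Matrix.of (fun s p => fromRows (C s.1 * (Btil n s.1)ᵀ) (Ctil n adj s.1) s.2 p) *ᵥ z) s
        = (fromRows (C s.1 * (Btil n s.1)ᵀ) (Ctil n adj s.1) *ᵥ z) s.2 := fun _ => rfl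
  simp only [funext_iff, Sigma.forall, hrow, fromRows_mulVec, Sum.forall, Sum.elim_inl,
    Sum.elim_inr, ← mulVec_mulVec, Btil_transpose_mulVec, Ctil_mulVec, Pi.zero_apply, sub_eq_zero,
    Subtype.forall, Prod.forall, forall_and]

variable {mdim : Fin m → ℕ} (A : Matrix (Fin n) (Fin n) ℝ)
  (B : ∀ i : Fin m, Matrix (Fin n) (Fin (mdim i)) ℝ)
  (F : ∀ i : Fin m, Matrix (Fin (mdim i)) (Fin n) ℝ)

theorem Atil_mulVec (v : Fin m × Fin n → ℝ) :
    Atil A B F *ᵥ v = fun p => ((A + ∑ j, B j * F j) *ᵥ fun t => v (p.1, t)) p.2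
      - ∑ j, ((B j * F j) *ᵥ fun t => v (j, t)) p.2 := by
  ext p
  simp [Atil, mulVec, dotProduct, Fintype.sum_prod_type, sub_mul, Finset.sum_sub_distrib, ite_mul]

theorem Atil_mulVec_comp_snd (w : Fin n → ℝ) :
    Atil A B F *ᵥ (w ∘ Prod.snd) = (A *ᵥ w) ∘ Prod.snd := by
  ext p
  simp [Atil_mulVec, add_mulVec, Matrix.sum_mulVec, ← Finset.sum_apply]

theorem Atil_pow_mulVec_comp_snd (w : Fin n → ℝ) (k : ℕ) :
    Atil A B F ^ k *ᵥ (w ∘ Prod.snd) = (A ^ k *ᵥ w) ∘ Prod.snd := by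
  induction k with
  | zero => simp
  | succ k ih =>
    rw [pow_succ', ← mulVec_mulVec, ih, Atil_mulVec_comp_snd, pow_succ', mulVec_mulVec]

end ErrorSystem

theorem error_system_jointly_ctrb_obs_general
    {n m : ℕ}
    (mdim pdim : Fin m → ℕ)
    (A : Matrix (Fin n) (Fin n) ℝ)
    (B : ∀ i : Fin m, Matrix (Fin n) (Fin (mdim i)) ℝ)
    (C : ∀ i : Fin m, Matrix (Fin (pdim i)) (Fin n) ℝ)
    (adj : Fin m → Fin m → Prop) [DecidableRel adj]
    (hconn : ∀ i j : Fin m, Relation.ReflTransGen adj i j)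
    (hjo : Observable
      (Matrix.of fun (p : Σ i : Fin m, Fin (pdim i)) k => C p.1 p.2 k) A)
    (F : ∀ i : Fin m, Matrix (Fin (mdim i)) (Fin n) ℝ) :
    Controllable (Atil A B F)
      (Matrix.of fun (p : Fin m × Fin n) (p' : Fin m × Fin n) =>
        Btil n p'.1 p p'.2)
    ∧ Observable
        (Matrix.of
          fun (s : Σ i : Fin m, (Fin (pdim i) ⊕ ({j // adj j i} × Fin n)))
              (p : Fin m × Fin n) =>
            Matrix.fromRows (C s.1 * (Btil n s.1)ᵀ) (Ctil n adj s.1) s.2 p)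
        (Atil A B F) := by
  refine ⟨of_Btil_eq_one ▸ controllable_one _, (observable_iff _ _).2 ?_⟩
  intro x hx
  rcases isEmpty_or_nonempty (Fin m × Fin n) with _ | hne
  · exact Subsingleton.elim _ _
  obtain ⟨i₀, -⟩ := hne.some
  have : Nonempty (Fin m) := ⟨i₀⟩
  have hout k (hk : k < Fintype.card (Fin m × Fin n)) :=
    (of_fromRows_Btil_Ctil_mulVec_eq_zero_iff C adj _).1 (hx k hk)
  have hagree j i (hji : adj j i) : (fun t => x (j, t)) = fun t => x (i, t) := by
    simpa using (funext ((hout 0 Fintype.card_pos i).2 j hji)).symm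
  obtain ⟨w, rfl⟩ : ∃ w : Fin n → ℝ, x = w ∘ Prod.snd :=
    ⟨fun t => x (i₀, t), funext fun p => (congrFun ((hconn i₀ p.1).eq_of_forall_eq hagree) p.2).symm⟩
  have hw : w = 0 := by
    refine (observable_iff _ A).1 hjo w fun k hk => funext fun ⟨i, q⟩ => ?_
    have hC := (hout k (hk.trans_le (Fintype.card_le_of_surjective _ Prod.snd_surjective)) i).1
    rw [Atil_pow_mulVec_comp_snd] at hC
    exact congrFun hC q
  simp [hw]

/-- **Lemma 1.** The `m`-channel system
`ε̇ = Ãε + Σⱼ B̃ⱼṽⱼ`, `ỹᵢ = col{Ĉᵢ, C̃ᵢ} ε` is jointly controllable and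
jointly observable. -/
theorem error_system_jointly_ctrb_obs
    {n m : ℕ} (hn : 0 < n) (hm : 1 < m)
    (mdim pdim : Fin m → ℕ)
    (A : Matrix (Fin n) (Fin n) ℝ)
    (B : ∀ i : Fin m, Matrix (Fin n) (Fin (mdim i)) ℝ)
    (C : ∀ i : Fin m, Matrix (Fin (pdim i)) (Fin n) ℝ)
    (adj : Fin m → Fin m → Prop) [DecidableRel adj]
    (hself : ∀ i, adj i i)
    (hconn : ∀ i j : Fin m, Relation.ReflTransGen adj i j)
    (hjc : Controllable A
      (Matrix.of fun k (p : Σ i : Fin m, Fin (mdim i)) => B p.1 k p.2))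
    (hjo : Observable
      (Matrix.of fun (p : Σ i : Fin m, Fin (pdim i)) k => C p.1 p.2 k) A)
    (F : ∀ i : Fin m, Matrix (Fin (mdim i)) (Fin n) ℝ) :
    Controllable (Atil A B F)
      (Matrix.of fun (p : Fin m × Fin n) (p' : Fin m × Fin n) =>
        Btil n p'.1 p p'.2)
    ∧ Observable
        (Matrix.of
          fun (s : Σ i : Fin m, (Fin (pdim i) ⊕ ({j // adj j i} × Fin n)))
              (p : Fin m × Fin n) =>
            Matrix.fromRows (C s.1 * (Btil n s.1)ᵀ) (Ctil n adj s.1) s.2 p)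
        (Atil A B F) :=
  error_system_jointly_ctrb_obs_general mdim pdim A B C adj hconn hjo F
end

section
/- For any given matrices K_i ∈ ℝ^{n×p_i}, i = 1,…,m, there exist matrices H_i ∈ ℝ^{n×nk_i} (where k_i = |𝒩_i|) such that the matrix pair (Ã + Σ_{i=1}^m B̃_i(K_i Ĉ_i + H_i C̃_i), B̃_q) is controllable with controllability index m for every q ∈ {1,…,m}. -/
open Matrix Finset

section Arbor
variable {m : ℕ} (adj : Fin m → Fin m → Prop) (q : Fin m)

/-- reachable from `q` in at most `k` steps -/
def reachN : ℕ → Fin m → Prop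
  | 0, v => v = q
  | k+1, v => reachN k v ∨ ∃ u, reachN k u ∧ adj u v

lemma reachN_exists (hconn : ∀ v, Relation.ReflTransGen adj q v) (v : Fin m) :
    ∃ k, reachN adj q k v := by
  induction hconn v with
  | refl => exact ⟨0, rfl⟩
  | tail _ hadj ih =>
    obtain ⟨k, hk⟩ := ih
    exact ⟨k + 1, Or.inr ⟨_, hk, hadj⟩⟩

open Classical in
lemma exists_arbor (hconn : ∀ v, Relation.ReflTransGen adj q v) :
    ∃ (par : Fin m → Fin m) (dist : Fin m → ℕ),
      par q = q ∧ ∀ v, v ≠ q → adj (par v) v ∧ dist (par v) < dist v := by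
  classical
  have hex := reachN_exists adj q hconn
  set dist : Fin m → ℕ := fun v => Nat.find (hex v) with hdist
  have hreach : ∀ v, reachN adj q (dist v) v := fun v => Nat.find_spec (hex v)
  have key : ∀ v, v ≠ q → ∃ u, adj u v ∧ dist u < dist v := by
    intro v hv
    have h0 : dist v ≠ 0 := by
      intro h
      have := hreach v
      rw [h] at this
      exact hv this
    obtain ⟨k, hk⟩ := Nat.exists_eq_succ_of_ne_zero h0
    have hr := hreach v
    rw [hk] at hr
    rcases hr with hr | ⟨u, hu, hadj⟩
    · exfalso
      have h2 : dist v ≤ k := Nat.find_le hr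
      omega
    · refine ⟨u, hadj, ?_⟩
      have : dist u ≤ k := Nat.find_le hu
      omega
  choose par hpar using key
  classical
  refine ⟨fun v => if h : v = q then q else par v h, dist, by simp, ?_⟩
  intro v hv
  simpa [hv] using hpar v hv

end Arbor

/-- distinct weights: `0` at the root `q`, `v+1` elsewhere -/
noncomputable def wfun {m : ℕ} (q : Fin m) : Fin m → ℝ :=
  fun v => if v = q then 0 else ((v : ℕ) : ℝ) + 1

/-- tree "Laplacian" with zero row sums -/
noncomputable def Lmat {m : ℕ} (q : Fin m) (par : Fin m → Fin m) :
    Matrix (Fin m) (Fin m) ℝ :=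
  Matrix.of fun v u => if v = q then 0
    else wfun q v * ((if u = v then 1 else 0) - (if u = par v then 1 else 0))

section Eigen
variable {m : ℕ} (q : Fin m) (par : Fin m → Fin m) (dist : Fin m → ℕ)
variable (hq : par q = q) (hd : ∀ v, v ≠ q → dist (par v) < dist v)

lemma wfun_q : wfun q q = 0 := by simp [wfun]

lemma wfun_ne {v : Fin m} (hv : v ≠ q) : wfun q v ≠ 0 := by
  simp only [wfun, if_neg hv]
  positivity

lemma wfun_inj : Function.Injective (wfun q) := by
  intro a b hab
  by_cases ha : a = q <;> by_cases hb : b = q <;>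
    simp only [wfun, if_pos, if_neg, ha, hb, if_true, if_false] at hab
  · rw [ha, hb]
  · exfalso
    have : ((b:ℕ):ℝ) + 1 > 0 := by positivity
    linarith
  · exfalso
    have : ((a:ℕ):ℝ) + 1 > 0 := by positivity
    linarith
  · have h2 : ((a:ℕ):ℝ) = ((b:ℕ):ℝ) := by linarith
    exact Fin.ext (Nat.cast_injective h2)

omit hq in
include hd in
lemma hits : ∀ v : Fin m, ∃ t, par^[t] v = q := by
  have key : ∀ N v, dist v ≤ N → ∃ t, par^[t] v = q := by
    intro N
    induction N with
    | zero =>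
      intro v hv
      by_cases h : v = q
      · exact ⟨0, h⟩
      · exact absurd (hd v h) (by omega)
    | succ N ih =>
      intro v hv
      by_cases h : v = q
      · exact ⟨0, h⟩
      · obtain ⟨t, ht⟩ := ih (par v) (by have := hd v h; omega)
        exact ⟨t + 1, by rw [Function.iterate_succ_apply]; exact ht⟩
  exact fun v => key (dist v) v le_rfl

end Eigen

section Eigen2
variable {m : ℕ} (q : Fin m) (par : Fin m → Fin m) (dist : Fin m → ℕ)

set_option linter.unusedSectionVars false in
lemma exists_left_eigvec (hq : par q = q) (hd : ∀ v, v ≠ q → dist (par v) < dist v)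
    (i : Fin m) :
    ∃ u : Fin m → ℝ, u ᵥ* Lmat q par = wfun q i • u ∧ u q ≠ 0 := by
  classical
  set w := wfun q with hw
  by_cases hiq : i = q
  · subst hiq
    refine ⟨Pi.single i 1, ?_, by simp⟩
    funext j
    have h1 : (Pi.single i (1:ℝ) ᵥ* Lmat i par) j = Lmat i par i j := by
      simp [Matrix.vecMul, dotProduct, Pi.single_apply]
    have h2 : Lmat i par i j = 0 := by simp [Lmat]
    have h3 : w i = 0 := wfun_q i
    rw [h1, h2, Pi.smul_apply, h3, smul_eq_mul, zero_mul]
  · have hit := hits q par dist hd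
    set D := Nat.find (hit i) with hD
    have hPD : par^[D] i = q := Nat.find_spec (hit i)
    have hmin : ∀ t, t < D → par^[t] i ≠ q := by
      intro t ht h
      have h2 : D ≤ t := Nat.find_le h
      omega
    have hD0 : 0 < D := by
      rcases Nat.eq_zero_or_pos D with h | h
      · exfalso; apply hiq; rw [h] at hPD; exact hPD
      · exact h
    have hdec : ∀ s t, t < s → s ≤ D → dist (par^[s] i) < dist (par^[t] i) := by
      intro s
      induction s with
      | zero => omega
      | succ s ih =>
        intro t ht hs
        have hstep : dist (par^[s+1] i) < dist (par^[s] i) := by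
          rw [Function.iterate_succ_apply']
          exact hd _ (hmin s (by omega))
        rcases Nat.lt_succ_iff_lt_or_eq.mp ht with h | h
        · exact hstep.trans (ih t h (by omega))
        · subst h; exact hstep
    have hinj : ∀ s t, s ≤ D → t ≤ D → par^[s] i = par^[t] i → s = t := by
      intro s t hs ht h
      rcases lt_trichotomy s t with hlt | he | hgt
      · have := hdec t s hlt ht; rw [h] at this; omega
      · exact he
      · have := hdec s t hgt hs; rw [h] at this; omega
    set f : ℕ → ℝ := fun t => Nat.rec (motive := fun _ => ℝ) 1
      (fun s fs => if par^[s+1] i = q then -(w (par^[s] i) * fs) / w i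
        else (w (par^[s] i) * fs) / (w (par^[s+1] i) - w i)) t with hf
    have f0 : f 0 = 1 := rfl
    have fsucc : ∀ s, f (s+1) = if par^[s+1] i = q then -(w (par^[s] i) * f s) / w i
        else (w (par^[s] i) * f s) / (w (par^[s+1] i) - w i) := fun s => rfl
    have hwi : w i ≠ 0 := wfun_ne q hiq
    have hdenom : ∀ s, 0 < s → s ≤ D → w (par^[s] i) - w i ≠ 0 := by
      intro s hs0 hsD h
      have h2 : w (par^[s] i) = w i := by linarith
      have h3 : par^[s] i = i := wfun_inj q h2
      have h4 : par^[0] i = i := rfl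
      have := hinj s 0 hsD (by omega) (by rw [h3, h4])
      omega
    have fne : ∀ t, t ≤ D → f t ≠ 0 := by
      intro t
      induction t with
      | zero => intro _; rw [f0]; exact one_ne_zero
      | succ s ih =>
        intro hsD
        have hs : s < D := by omega
        have hnum : w (par^[s] i) ≠ 0 := wfun_ne q (hmin s hs)
        have hfs : f s ≠ 0 := ih (by omega)
        rw [fsucc]
        by_cases hq' : par^[s+1] i = q
        · rw [if_pos hq']
          exact div_ne_zero (neg_ne_zero.mpr (mul_ne_zero hnum hfs)) hwi
        · rw [if_neg hq']
          exact div_ne_zero (mul_ne_zero hnum hfs) (hdenom (s+1) (by omega) hsD)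
    set u : Fin m → ℝ :=
      fun v => if h : ∃ t, t ≤ D ∧ par^[t] i = v then f (Nat.find h) else 0 with hu
    have u_eq : ∀ s, s ≤ D → u (par^[s] i) = f s := by
      intro s hs
      have h : ∃ t, t ≤ D ∧ par^[t] i = par^[s] i := ⟨s, hs, rfl⟩
      have h2 : Nat.find h = s := by
        have h1 := Nat.find_spec h
        exact hinj _ s h1.1 hs h1.2
      simp only [hu]
      rw [dif_pos h, h2]
    have u_zero : ∀ v, (¬ ∃ t, t ≤ D ∧ par^[t] i = v) → u v = 0 := by
      intro v hv
      simp only [hu]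
      rw [dif_neg hv]
    have uq : u q = f D := by
      have := u_eq D le_rfl
      rwa [hPD] at this
    refine ⟨u, ?_, by rw [uq]; exact fne D le_rfl⟩
    funext j
    -- expand the vecMul
    have expand : (u ᵥ* Lmat q par) j =
        (∑ v, (if v = q then 0 else if j = v then u v * w v else 0))
          - ∑ v, (if v = q then 0 else if j = par v then u v * w v else 0) := by
      have h1 : (u ᵥ* Lmat q par) j = ∑ v, u v * Lmat q par v j := by
        simp [Matrix.vecMul, dotProduct]
      rw [h1, ← Finset.sum_sub_distrib]
      apply Finset.sum_congr rfl
      intro v _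
      simp only [Lmat, Matrix.of_apply, ← hw]
      split_ifs <;> ring
    have SumX : (∑ v, (if v = q then 0 else if j = v then u v * w v else 0))
        = if j = q then 0 else u j * w j := by
      rw [Finset.sum_eq_single j]
      · simp
      · intro v _ hvj
        have hjv : ¬ j = v := fun h => hvj h.symm
        simp [hjv]
      · intro h; exact absurd (Finset.mem_univ j) h
    have SumY_zero : (∀ t, t < D → par^[t+1] i ≠ j) →
        (∑ v, (if v = q then 0 else if j = par v then u v * w v else 0)) = 0 := by
      intro hno
      apply Finset.sum_eq_zero
      intro v _
      split_ifs with h1 h2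
      · rfl
      · by_cases hp : ∃ t, t ≤ D ∧ par^[t] i = v
        · obtain ⟨t, htD, htv⟩ := hp
          have htD' : t < D := by
            rcases Nat.lt_or_ge t D with h | h
            · exact h
            · exfalso; apply h1; rw [← htv]
              have : t = D := by omega
              rw [this]; exact hPD
          exfalso
          apply hno t htD'
          rw [Function.iterate_succ_apply', htv, ← h2]
        · rw [u_zero v hp, zero_mul]
      · rfl
    have SumY_single : ∀ t, t < D → par^[t+1] i = j →
        (∑ v, (if v = q then 0 else if j = par v then u v * w v else 0))
          = f t * w (par^[t] i) := by
      intro t htD htj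
      rw [Finset.sum_eq_single (par^[t] i)]
      · rw [if_neg (hmin t htD), if_pos]
        · rw [u_eq t (by omega)]
        · rw [← htj, Function.iterate_succ_apply']
      · intro v _ hvne
        split_ifs with h1 h2
        · rfl
        · by_cases hp : ∃ s, s ≤ D ∧ par^[s] i = v
          · obtain ⟨s, hsD, hsv⟩ := hp
            have hsD' : s < D := by
              rcases Nat.lt_or_ge s D with h | h
              · exact h
              · exfalso; apply h1; rw [← hsv]
                have : s = D := by omega
                rw [this]; exact hPD
            exfalso
            have hps : par^[s+1] i = j := by
              rw [Function.iterate_succ_apply', hsv, ← h2]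
            have hst1 : s + 1 = t + 1 := hinj _ _ (by omega) (by omega) (by rw [hps, htj])
            have hst : s = t := by omega
            exact hvne (by rw [← hsv, hst])
          · rw [u_zero v hp, zero_mul]
        · rfl
      · intro h; exact absurd (Finset.mem_univ _) h
    rw [expand, SumX, Pi.smul_apply, smul_eq_mul]
    by_cases hj : ∃ s, s ≤ D ∧ par^[s] i = j
    · obtain ⟨s, hsD, hsj⟩ := hj
      by_cases hs0 : s = 0
      · -- j = i
        subst hs0
        have hji : j = i := by rw [← hsj]; rfl
        subst hji
        rw [if_neg hiq]
        rw [SumY_zero ?side]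
        case side =>
          intro t htD h
          have := hinj (t+1) 0 (by omega) (by omega) (by rw [h, hsj])
          omega
        ring
      · by_cases hsD' : s = D
        · -- j = q
          subst hsD'
          have hjq : j = q := by rw [← hsj]; exact hPD
          subst hjq
          rw [if_pos rfl]
          have h1 : D - 1 + 1 = D := by omega
          rw [SumY_single (D-1) (by omega) (by rw [h1]; exact hPD)]
          rw [uq]
          have hfD : f D = -(w (par^[D-1] i) * f (D-1)) / w i := by
            have h2 := fsucc (D-1)
            rw [h1] at h2
            rw [h2, if_pos hPD]
          have key : f D * w i = -(w (par^[D-1] i) * f (D-1)) := by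
            rw [hfD, div_mul_cancel₀ _ hwi]
          linear_combination -key
        · -- 0 < s < D, j = par^[s] i on path
          have hs1 : 1 ≤ s := by omega
          have hsltD : s < D := by omega
          have hjq : j ≠ q := by rw [← hsj]; exact hmin s hsltD
          rw [if_neg hjq]
          have h1 : s - 1 + 1 = s := by omega
          rw [SumY_single (s-1) (by omega) (by rw [h1]; exact hsj)]
          have huj : u j = f s := by rw [← hsj]; exact u_eq s hsD
          rw [huj]
          have hfs : f s = (w (par^[s-1] i) * f (s-1)) / (w (par^[s] i) - w i) := by
            have h2 := fsucc (s-1)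
            rw [h1] at h2
            rw [h2, if_neg (by rw [hsj]; exact hjq)]
          have hden' : w j - w i ≠ 0 := by
            rw [← hsj]; exact hdenom s (by omega) hsD
          have key : f s * (w j - w i) = w (par^[s-1] i) * f (s-1) := by
            rw [hfs, hsj, div_mul_cancel₀ _ hden']
          linear_combination key
    · -- j off path
      have hjq : j ≠ q := by
        intro h; apply hj; exact ⟨D, le_rfl, by rw [hPD, h]⟩
      rw [if_neg hjq]
      rw [SumY_zero ?off]
      case off =>
        intro t htD h
        exact hj ⟨t+1, by omega, h⟩
      have huj : u j = 0 := u_zero j (by exact hj)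
      rw [huj]
      ring
end Eigen2

lemma scalar_det_ne_zero {m : ℕ} (q : Fin m) (par : Fin m → Fin m) (dist : Fin m → ℕ)
    (hq : par q = q) (hd : ∀ v, v ≠ q → dist (par v) < dist v) :
    (Matrix.of fun i k : Fin m => ((Lmat q par) ^ (k : ℕ)) i q).det ≠ 0 := by
  classical
  intro hdet
  obtain ⟨a, ha0, ha⟩ := (Matrix.exists_mulVec_eq_zero_iff).mpr hdet
  set G : Matrix (Fin m) (Fin m) ℝ :=
    Matrix.of fun i k : Fin m => ((Lmat q par) ^ (k : ℕ)) i q with hG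
  set p : Polynomial ℝ := ∑ k : Fin m, Polynomial.C (a k) * Polynomial.X ^ (k : ℕ) with hp
  have hroots : ∀ i : Fin m, p.eval (wfun q i) = 0 := by
    intro i
    obtain ⟨u, hu, huq⟩ := exists_left_eigvec q par dist hq hd i
    have hpow : ∀ k : ℕ, u ᵥ* (Lmat q par) ^ k = (wfun q i) ^ k • u := by
      intro k
      induction k with
      | zero => simp
      | succ k ih =>
        rw [pow_succ, ← Matrix.vecMul_vecMul, ih, Matrix.smul_vecMul, hu, smul_smul,
          ← pow_succ]
    have h0 : u ⬝ᵥ (G *ᵥ a) = 0 := by rw [ha, dotProduct_zero]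
    rw [dotProduct_mulVec] at h0
    have huG : u ᵥ* G = fun k : Fin m => (wfun q i) ^ (k : ℕ) * u q := by
      funext k
      have h1 : (u ᵥ* G) k = ∑ v, u v * ((Lmat q par) ^ (k : ℕ)) v q := by
        simp [Matrix.vecMul, dotProduct, hG]
      have h2 : (u ᵥ* (Lmat q par) ^ (k : ℕ)) q = ∑ v, u v * ((Lmat q par) ^ (k : ℕ)) v q := by
        simp [Matrix.vecMul, dotProduct]
      rw [h1, ← h2, hpow k, Pi.smul_apply, smul_eq_mul]
    rw [huG] at h0
    have h3 : ∑ k : Fin m, ((wfun q i) ^ (k : ℕ) * u q) * a k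
        = (∑ k : Fin m, a k * (wfun q i) ^ (k : ℕ)) * u q := by
      rw [Finset.sum_mul]
      apply Finset.sum_congr rfl
      intro k _
      ring
    rw [show ((fun k : Fin m => (wfun q i) ^ (k : ℕ) * u q) ⬝ᵥ a)
        = ∑ k : Fin m, ((wfun q i) ^ (k : ℕ) * u q) * a k from rfl, h3] at h0
    have h4 : ∑ k : Fin m, a k * (wfun q i) ^ (k : ℕ) = 0 := by
      rcases mul_eq_zero.mp h0 with h | h
      · exact h
      · exact absurd h huq
    rw [hp]
    rw [Polynomial.eval_finset_sum]
    simpa [Polynomial.eval_mul, Polynomial.eval_pow] using h4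
  have hm0 : 0 < m := Fin.pos q
  have hdeg : p.natDegree < Fintype.card (Fin m) := by
    rw [Fintype.card_fin]
    have : p.natDegree ≤ m - 1 := by
      apply Polynomial.natDegree_sum_le_of_forall_le
      intro k _
      exact (Polynomial.natDegree_C_mul_le _ _).trans
        (by rw [Polynomial.natDegree_X_pow]; omega)
    omega
  have hp0 : p = 0 :=
    Polynomial.eq_zero_of_natDegree_lt_card_of_eval_eq_zero p (wfun_inj q) hroots hdeg
  apply ha0
  funext k
  have hcoeff : p.coeff (k : ℕ) = a k := by
    rw [hp, Polynomial.finset_sum_coeff]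
    rw [Finset.sum_eq_single k]
    · simp
    · intro j _ hjk
      rw [Polynomial.coeff_C_mul, Polynomial.coeff_X_pow]
      have : ¬ ((k : ℕ) = (j : ℕ)) := fun h => hjk (Fin.ext h).symm
      rw [if_neg this, mul_zero]
    · intro h; exact absurd (Finset.mem_univ k) h
  rw [hp0] at hcoeff
  simpa using hcoeff.symm

section Kron
variable {n m : ℕ}

/-- `L ⊗ Iₙ` -/
noncomputable def Ltil (n : ℕ) {m : ℕ} (q : Fin m) (par : Fin m → Fin m) :
    Matrix (Fin m × Fin n) (Fin m × Fin n) ℝ :=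
  kroneckerMap (· * ·) (Lmat q par) (1 : Matrix (Fin n) (Fin n) ℝ)

lemma kron_pow (L : Matrix (Fin m) (Fin m) ℝ) (k : ℕ) :
    (kroneckerMap (· * ·) L (1 : Matrix (Fin n) (Fin n) ℝ)) ^ k
      = kroneckerMap (· * ·) (L ^ k) (1 : Matrix (Fin n) (Fin n) ℝ) := by
  induction k with
  | zero =>
    rw [pow_zero, pow_zero]
    exact (Matrix.one_kronecker_one (α := ℝ)).symm
  | succ k ih =>
    rw [pow_succ, ih, ← Matrix.mul_kronecker_mul, ← pow_succ, Matrix.one_mul]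

lemma ctrb_Ltil (q : Fin m) (par : Fin m → Fin m) :
    ctrbMat (Ltil n q par) (Btil n q) m
      = kroneckerMap (· * ·)
          (Matrix.of fun i k : Fin m => ((Lmat q par) ^ (k : ℕ)) i q)
          (1 : Matrix (Fin n) (Fin n) ℝ) := by
  ext ⟨i, j⟩ ⟨k, l⟩
  show ((Ltil n q par ^ (k : ℕ)) * Btil n q) (i, j) l = _
  rw [Ltil, kron_pow]
  have : ((kroneckerMap (· * ·) ((Lmat q par) ^ (k:ℕ)) (1 : Matrix (Fin n) (Fin n) ℝ))
      * Btil n q) (i, j) l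
      = ∑ p : Fin m × Fin n, ((Lmat q par) ^ (k:ℕ)) i p.1
          * (1 : Matrix (Fin n) (Fin n) ℝ) j p.2 * (Btil n q) p l := by
    simp [Matrix.mul_apply, kroneckerMap]
  rw [this, Finset.sum_eq_single ((q, l) : Fin m × Fin n)]
  · simp [Btil, Matrix.one_apply, kroneckerMap]
  · intro p _ hp
    have : ¬ (p.1 = q ∧ p.2 = l) := by
      intro h
      exact hp (Prod.ext h.1 h.2)
    simp [Btil, this]
  · intro h; exact absurd (Finset.mem_univ _) h

lemma det_ctrb_Ltil (q : Fin m) (par : Fin m → Fin m) (dist : Fin m → ℕ)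
    (hq : par q = q) (hd : ∀ v, v ≠ q → dist (par v) < dist v) :
    (ctrbMat (Ltil n q par) (Btil n q) m).det ≠ 0 := by
  rw [ctrb_Ltil, Matrix.det_kronecker, Matrix.det_one, one_pow, mul_one]
  exact pow_ne_zero _ (scalar_det_ne_zero q par dist hq hd)

end Kron

section Perturb
variable {k : ℕ} {κ : Type*} [Fintype κ] [DecidableEq κ]

lemma exists_eps (A M₀ : Matrix (Fin k × κ) (Fin k × κ) ℝ)
    (Bq : Matrix (Fin k × κ) κ ℝ)
    (h : (ctrbMat A Bq k).det ≠ 0) :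
    ∃ ε : ℝ, ε ≠ 0 ∧ (ctrbMat (A + ε • M₀) Bq k).det ≠ 0 := by
  set f : ℝ → ℝ := fun ε => (ctrbMat (A + ε • M₀) Bq k).det with hf
  have hbase : Continuous fun ε : ℝ => A + ε • M₀ := by
    apply continuous_matrix
    intro i j
    have : (fun ε : ℝ => (A + ε • M₀) i j) = fun ε => A i j + ε * M₀ i j := by
      funext ε; simp [Matrix.add_apply, Matrix.smul_apply]
    rw [this]
    exact continuous_const.add (continuous_id.mul continuous_const)
  have hpow : ∀ t : ℕ, Continuous fun ε : ℝ => (A + ε • M₀) ^ t := by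
    intro t
    induction t with
    | zero => simpa [pow_zero] using continuous_const
    | succ t ih =>
      have : (fun ε : ℝ => (A + ε • M₀) ^ (t+1))
          = fun ε => ((A + ε • M₀) ^ t) * (A + ε • M₀) := by
        funext ε; rw [pow_succ]
      rw [this]
      exact ih.matrix_mul hbase
  have hcont : Continuous f := by
    apply Continuous.matrix_det
    apply continuous_matrix
    intro i p
    exact (((hpow p.1).matrix_mul continuous_const).matrix_elem i p.2)
  have hf0 : f 0 ≠ 0 := by
    have : A + (0:ℝ) • M₀ = A := by rw [zero_smul, add_zero]
    simpa [hf, this]  using h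
  have hS : {ε : ℝ | f ε ≠ 0} ∈ nhds (0:ℝ) := by
    have hopen : IsOpen {ε : ℝ | f ε ≠ 0} :=
      isOpen_compl_singleton.preimage hcont
    exact hopen.mem_nhds hf0
  have hS' : {ε : ℝ | f ε ≠ 0} ∈ nhdsWithin (0:ℝ) {(0:ℝ)}ᶜ :=
    nhdsWithin_le_nhds hS
  have hne : ({ε : ℝ | f ε ≠ 0} ∩ {(0:ℝ)}ᶜ).Nonempty := by
    have h2 : {(0:ℝ)}ᶜ ∈ nhdsWithin (0:ℝ) {(0:ℝ)}ᶜ := self_mem_nhdsWithin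
    exact Filter.nonempty_of_mem (Filter.inter_mem hS' h2)
  obtain ⟨ε, hε1, hε2⟩ := hne
  exact ⟨ε, by simpa using hε2, hε1⟩

lemma ctrb_smul (c : ℝ) (N : Matrix (Fin k × κ) (Fin k × κ) ℝ)
    (Bq : Matrix (Fin k × κ) κ ℝ) :
    ctrbMat (c • N) Bq k
      = ctrbMat N Bq k * Matrix.diagonal (fun p : Fin k × κ => c ^ (p.1 : ℕ)) := by
  ext i p
  rw [Matrix.mul_diagonal]
  show ((c • N) ^ (p.1 : ℕ) * Bq) i p.2 = ((N ^ (p.1:ℕ) * Bq) i p.2) * c ^ (p.1:ℕ)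
  rw [smul_pow, Matrix.smul_mul, Matrix.smul_apply, smul_eq_mul]
  ring

lemma exists_c (M₀ L : Matrix (Fin k × κ) (Fin k × κ) ℝ)
    (Bq : Matrix (Fin k × κ) κ ℝ)
    (h : (ctrbMat L Bq k).det ≠ 0) :
    ∃ c : ℝ, (ctrbMat (M₀ + c • L) Bq k).det ≠ 0 := by
  obtain ⟨ε, hε, hdet⟩ := exists_eps L M₀ Bq h
  refine ⟨ε⁻¹, ?_⟩
  have hinv : ε⁻¹ ≠ 0 := inv_ne_zero hε
  have heq : M₀ + ε⁻¹ • L = ε⁻¹ • (L + ε • M₀) := by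
    rw [smul_add, smul_smul, inv_mul_cancel₀ hε, one_smul, add_comm]
  rw [heq, ctrb_smul, Matrix.det_mul, Matrix.det_diagonal]
  apply mul_ne_zero hdet
  exact Finset.prod_ne_zero_iff.mpr fun p _ => pow_ne_zero _ hinv



section Realize
variable {n m : ℕ} (adj : Fin m → Fin m → Prop) [DecidableRel adj]

/-- the feedback gain realizing `Lmat` through the graph constraints -/
noncomputable def Hone (q : Fin m) (par : Fin m → Fin m) (i : Fin m) :
    Matrix (Fin n) ({j // adj j i} × Fin n) ℝ :=
  Matrix.of fun k r =>
    if (r.1 : Fin m) = par i ∧ i ≠ q then wfun q i * (if k = r.2 then 1 else 0) else 0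

lemma key_realize (q : Fin m) (par : Fin m → Fin m)
    (hq : par q = q) (hadj : ∀ v, v ≠ q → adj (par v) v ∧ par v ≠ v) :
    (∑ i : Fin m, Btil n i * (Hone (n := n) adj q par i * Ctil n adj i)) = Ltil n q par := by
  ext ⟨v, k⟩ ⟨j, l⟩
  have hBtil : ∀ (i : Fin m) (Y : Matrix (Fin n) (Fin m × Fin n) ℝ),
      (Btil n i * Y) (v, k) (j, l) = if v = i then Y k (j, l) else 0 := by
    intro i Y
    rw [Matrix.mul_apply, Finset.sum_eq_single k]
    · simp only [Btil, Matrix.of_apply]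
      by_cases hvi : v = i
      · simp [hvi]
      · simp [hvi]
    · intro b _ hbk
      simp only [Btil, Matrix.of_apply]
      have : ¬ (v = i ∧ k = b) := fun h => hbk h.2.symm
      rw [if_neg this, zero_mul]
    · intro h; exact absurd (Finset.mem_univ _) h
  rw [Matrix.sum_apply]
  rw [Finset.sum_congr rfl (fun i _ => hBtil i (Hone adj q par i * Ctil n adj i))]
  rw [Finset.sum_ite_eq]
  simp only [Finset.mem_univ, if_true]
  have hRHS : Ltil n q par (v, k) (j, l)
      = Lmat q par v j * (if k = l then 1 else 0) := by
    simp [Ltil, kroneckerMap, Matrix.one_apply]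
  rw [hRHS]
  by_cases hvq : v = q
  · -- row q : everything vanishes
    have h1 : Lmat q par v j = 0 := by simp [Lmat, hvq]
    rw [h1, zero_mul]
    rw [Matrix.mul_apply]
    apply Finset.sum_eq_zero
    intro r _
    simp only [Hone, Matrix.of_apply]
    rw [if_neg (by tauto), zero_mul]
  · obtain ⟨hadj1, hpne⟩ := hadj v hvq
    rw [Matrix.mul_apply]
    rw [Finset.sum_eq_single ((⟨par v, hadj1⟩, l) : {j // adj j v} × Fin n)]
    · simp only [Hone, Ctil, Matrix.of_apply, if_true, true_and]
      rw [if_pos hvq]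
      simp only [Lmat, Matrix.of_apply, if_neg hvq]
      ring
    · intro r _ hr
      simp only [Hone, Ctil, Matrix.of_apply]
      by_cases hc : (r.1 : Fin m) = par v ∧ v ≠ q
      · -- then r.2 ≠ l
        have hr2 : r.2 ≠ l := by
          intro h
          apply hr
          apply Prod.ext
          · exact Subtype.ext hc.1
          · exact h
        rw [if_pos hc]
        rw [if_neg hr2]
        ring
      · rw [if_neg hc, zero_mul]
    · intro h; exact absurd (Finset.mem_univ _) h

lemma closed_eq {mdim pdim : Fin m → ℕ}
    (A : Matrix (Fin n) (Fin n) ℝ)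
    (B : ∀ i : Fin m, Matrix (Fin n) (Fin (mdim i)) ℝ)
    (C : ∀ i : Fin m, Matrix (Fin (pdim i)) (Fin n) ℝ)
    (F : ∀ i : Fin m, Matrix (Fin (mdim i)) (Fin n) ℝ)
    (K : ∀ i : Fin m, Matrix (Fin n) (Fin (pdim i)) ℝ)
    (q : Fin m) (par : Fin m → Fin m) (c : ℝ)
    (hq : par q = q) (hadj : ∀ v, v ≠ q → adj (par v) v ∧ par v ≠ v) :
    (Atil A B F + ∑ i : Fin m, Btil n i *
        (K i * (C i * (Btil n i)ᵀ) + (c • Hone (n := n) adj q par i) * Ctil n adj i))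
      = (Atil A B F + ∑ i : Fin m, Btil n i * (K i * (C i * (Btil n i)ᵀ)))
          + c • Ltil n q par := by
  have h1 : ∀ i : Fin m, Btil n i *
      (K i * (C i * (Btil n i)ᵀ) + (c • Hone (n := n) adj q par i) * Ctil n adj i)
      = Btil n i * (K i * (C i * (Btil n i)ᵀ))
        + c • (Btil n i * (Hone (n := n) adj q par i * Ctil n adj i)) := by
    intro i
    rw [Matrix.mul_add, Matrix.smul_mul, Matrix.mul_smul]
  rw [Finset.sum_congr rfl (fun i _ => h1 i), Finset.sum_add_distrib,
    ← Finset.smul_sum, key_realize adj q par hq hadj, add_assoc]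

end Realize


section Poly

/-- controllability matrix over an arbitrary commutative ring -/
def ctrbMatR {R : Type*} [CommRing R] {ι κ : Type*} [Fintype ι] [DecidableEq ι]
    (A : Matrix ι ι R) (B : Matrix ι κ R) (k : ℕ) : Matrix ι (Fin k × κ) R :=
  Matrix.of fun i p => ((A ^ (p.1 : ℕ)) * B) i p.2

lemma ctrbMatR_real {ι κ : Type*} [Fintype ι] [DecidableEq ι]
    (A : Matrix ι ι ℝ) (B : Matrix ι κ ℝ) (k : ℕ) :
    ctrbMatR A B k = ctrbMat A B k := rfl

lemma matMap_pow {R S : Type*} [CommRing R] [CommRing S] (f : R →+* S)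
    {ι : Type*} [Fintype ι] [DecidableEq ι] (A : Matrix ι ι R) :
    ∀ t : ℕ, (A ^ t).map f = (A.map f) ^ t := by
  intro t
  induction t with
  | zero =>
    rw [pow_zero, pow_zero]
    exact Matrix.map_one _ (map_zero f) (map_one f)
  | succ t ih => rw [pow_succ, pow_succ, Matrix.map_mul, ih]

lemma matMap_sum {R S γ : Type*} [CommRing R] [CommRing S] (f : R →+* S)
    {ι κ : Type*} (s : Finset γ) (M : γ → Matrix ι κ R) :
    (∑ i ∈ s, M i).map f = ∑ i ∈ s, (M i).map f := by
  ext u v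
  simp [Matrix.map_apply, Matrix.sum_apply, map_sum]

lemma matMap_add {R S : Type*} [CommRing R] [CommRing S] (f : R →+* S)
    {ι κ : Type*} (M N : Matrix ι κ R) :
    (M + N).map f = M.map f + N.map f := by
  ext u v
  simp [Matrix.map_apply, map_add]

lemma ctrbMatR_map {R S : Type*} [CommRing R] [CommRing S] (f : R →+* S)
    {ι κ : Type*} [Fintype ι] [DecidableEq ι]
    (A : Matrix ι ι R) (B : Matrix ι κ R) (k : ℕ) :
    (ctrbMatR A B k).map f = ctrbMatR (A.map f) (B.map f) k := by
  ext i p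
  show f ((A ^ (p.1 : ℕ) * B) i p.2) = ((A.map f) ^ (p.1 : ℕ) * B.map f) i p.2
  rw [← matMap_pow f A, ← Matrix.map_mul]
  rfl

end Poly

section Main
variable {n m : ℕ}

/-- The main genericity step: existence of a single `H` making all the
controllability determinants nonzero. -/
lemma exists_H_det_ne_zero (hn : 0 < n) (hm : 1 < m)
    {mdim pdim : Fin m → ℕ}
    (A : Matrix (Fin n) (Fin n) ℝ)
    (B : ∀ i : Fin m, Matrix (Fin n) (Fin (mdim i)) ℝ)
    (C : ∀ i : Fin m, Matrix (Fin (pdim i)) (Fin n) ℝ)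
    (adj : Fin m → Fin m → Prop) [DecidableRel adj]
    (hconn : ∀ i j : Fin m, Relation.ReflTransGen adj i j)
    (F : ∀ i : Fin m, Matrix (Fin (mdim i)) (Fin n) ℝ)
    (K : ∀ i : Fin m, Matrix (Fin n) (Fin (pdim i)) ℝ) :
    ∃ H : ∀ i : Fin m, Matrix (Fin n) ({j // adj j i} × Fin n) ℝ,
      ∀ q : Fin m,
        (ctrbMat
          (Atil A B F
            + ∑ i : Fin m, Btil n i * (K i * (C i * (Btil n i)ᵀ) + H i * Ctil n adj i))
          (Btil n q) m).det ≠ 0 := by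
  classical
  -- the closed-loop matrix as function of H
  set clo : (∀ i : Fin m, Matrix (Fin n) ({j // adj j i} × Fin n) ℝ) →
      Matrix (Fin m × Fin n) (Fin m × Fin n) ℝ := fun H =>
    Atil A B F
      + ∑ i : Fin m, Btil n i * (K i * (C i * (Btil n i)ᵀ) + H i * Ctil n adj i)
    with hclo
  -- step 1 : for each q there exists some H (depending on q)
  have perq : ∀ q : Fin m,
      ∃ H : ∀ i : Fin m, Matrix (Fin n) ({j // adj j i} × Fin n) ℝ,
        (ctrbMat (clo H) (Btil n q) m).det ≠ 0 := by
    intro q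
    obtain ⟨par, dist, hparq, hprop⟩ := exists_arbor adj q (fun v => hconn q v)
    have hdist : ∀ v, v ≠ q → dist (par v) < dist v := fun v hv => (hprop v hv).2
    have hadj2 : ∀ v, v ≠ q → adj (par v) v ∧ par v ≠ v := by
      intro v hv
      refine ⟨(hprop v hv).1, fun h => ?_⟩
      have h2 := hdist v hv
      rw [h] at h2
      omega
    have hdet := det_ctrb_Ltil (n := n) q par dist hparq hdist
    obtain ⟨c, hc⟩ := exists_c
      (Atil A B F + ∑ i : Fin m, Btil n i * (K i * (C i * (Btil n i)ᵀ)))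
      (Ltil n q par) (Btil n q) hdet
    refine ⟨fun i => c • Hone adj q par i, ?_⟩
    have heq : clo (fun i => c • Hone adj q par i)
        = Atil A B F + ∑ i : Fin m, Btil n i * (K i * (C i * (Btil n i)ᵀ))
            + c • Ltil n q par := closed_eq adj A B C F K q par c hparq hadj2
    rw [heq]
    exact hc
  -- step 2 : genericity over the entries of H
  set ν := Σ i : Fin m, (Fin n × ({j // adj j i} × Fin n)) with hν
  set RR := MvPolynomial ν ℝ with hRR
  set HP : ∀ i : Fin m, Matrix (Fin n) ({j // adj j i} × Fin n) RR :=
    fun i => Matrix.of fun k r => MvPolynomial.X ⟨i, (k, r)⟩ with hHP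
  set MP : Matrix (Fin m × Fin n) (Fin m × Fin n) RR :=
    (Atil A B F).map (MvPolynomial.C (σ := ν))
      + ∑ i : Fin m, (Btil n i).map (MvPolynomial.C (σ := ν)) *
          ((K i * (C i * (Btil n i)ᵀ)).map (MvPolynomial.C (σ := ν))
            + HP i * (Ctil n adj i).map (MvPolynomial.C (σ := ν))) with hMP
  set D : Fin m → RR :=
    fun q => (ctrbMatR MP ((Btil n q).map MvPolynomial.C) m).det with hD
  -- evaluation of D
  have heval : ∀ (φ : ν → ℝ) (q : Fin m),
      MvPolynomial.eval φ (D q)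
        = (ctrbMat (clo (fun i => Matrix.of fun k r => φ ⟨i, (k, r)⟩))
            (Btil n q) m).det := by
    intro φ q
    have hCmap : ∀ {ι κ : Type} (M : Matrix ι κ ℝ),
        (M.map MvPolynomial.C).map (MvPolynomial.eval φ) = M := by
      intro ι κ M
      rw [Matrix.map_map]
      have : (MvPolynomial.eval φ) ∘ (MvPolynomial.C (σ := ν) (R := ℝ)) = id := by
        funext x; simp
      rw [this, Matrix.map_id]
    have hMPmap : MP.map (MvPolynomial.eval φ)
        = clo (fun i => Matrix.of fun k r => φ ⟨i, (k, r)⟩) := by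
      rw [hMP, hclo]
      rw [matMap_add (MvPolynomial.eval φ)]
      rw [matMap_sum (MvPolynomial.eval φ)]
      rw [hCmap]
      have hHPmap : ∀ i : Fin m, (HP i).map (MvPolynomial.eval φ)
          = Matrix.of fun k r => φ ⟨i, (k, r)⟩ := by
        intro i
        ext k r
        simp [hHP, Matrix.map_apply]
      congr 1
      apply Finset.sum_congr rfl
      intro i _
      rw [Matrix.map_mul, hCmap, matMap_add (MvPolynomial.eval φ), hCmap,
        Matrix.map_mul, hHPmap i, hCmap]
    rw [hD]
    rw [RingHom.map_det]
    rw [RingHom.mapMatrix_apply]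
    rw [ctrbMatR_map, hMPmap, hCmap, ctrbMatR_real]
  -- D q is a nonzero polynomial
  have hDne : ∀ q : Fin m, D q ≠ 0 := by
    intro q hzero
    obtain ⟨H, hH⟩ := perq q
    apply hH
    have h1 := heval (fun x => H x.1 x.2.1 x.2.2) q
    rw [hzero, map_zero] at h1
    have h2 : (fun i => Matrix.of fun k r =>
        (fun x : ν => H x.1 x.2.1 x.2.2) ⟨i, (k, r)⟩) = H := by
      funext i; ext k r; rfl
    rw [h2] at h1
    exact h1.symm
  -- the product is nonzero, hence has a nonvanishing point
  have hprod : (∏ q : Fin m, D q) ≠ 0 :=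
    Finset.prod_ne_zero_iff.mpr fun q _ => hDne q
  have hpoint : ∃ φ : ν → ℝ, MvPolynomial.eval φ (∏ q : Fin m, D q) ≠ 0 := by
    by_contra hcon
    push_neg at hcon
    apply hprod
    apply MvPolynomial.funext
    intro x
    rw [map_zero]
    exact hcon x
  obtain ⟨φ, hφ⟩ := hpoint
  refine ⟨fun i => Matrix.of fun k r => φ ⟨i, (k, r)⟩, ?_⟩
  intro q
  have hq : MvPolynomial.eval φ (D q) ≠ 0 := by
    intro h
    apply hφ
    rw [map_prod]
    exact Finset.prod_eq_zero (Finset.mem_univ q) h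
  rw [heval φ q] at hq
  exact hq

end Main

/-- **Lemma 2.** For any given matrices `Kᵢ`, there exist matrices
`Hᵢ` for which the pair `(Ã + Σᵢ B̃ᵢ(KᵢĈᵢ + HᵢC̃ᵢ), B̃_q)` is controllable with
controllability index `m` for every `q`. -/
theorem exists_H_controllable_index_m
    {n m : ℕ} (hn : 0 < n) (hm : 1 < m)
    (mdim pdim : Fin m → ℕ)
    (A : Matrix (Fin n) (Fin n) ℝ)
    (B : ∀ i : Fin m, Matrix (Fin n) (Fin (mdim i)) ℝ)
    (C : ∀ i : Fin m, Matrix (Fin (pdim i)) (Fin n) ℝ)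
    (adj : Fin m → Fin m → Prop) [DecidableRel adj]
    (hself : ∀ i, adj i i)
    (hconn : ∀ i j : Fin m, Relation.ReflTransGen adj i j)
    (F : ∀ i : Fin m, Matrix (Fin (mdim i)) (Fin n) ℝ)
    (K : ∀ i : Fin m, Matrix (Fin n) (Fin (pdim i)) ℝ) :
    ∃ H : ∀ i : Fin m, Matrix (Fin n) ({j // adj j i} × Fin n) ℝ,
      ∀ q : Fin m,
        Controllable
          (Atil A B F
            + ∑ i : Fin m, Btil n i * (K i * (C i * (Btil n i)ᵀ) + H i * Ctil n adj i))
          (Btil n q)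
        ∧ ctrlIndex
            (Atil A B F
              + ∑ i : Fin m, Btil n i * (K i * (C i * (Btil n i)ᵀ) + H i * Ctil n adj i))
            (Btil n q) = m := by
  classical
  obtain ⟨H, hH⟩ := exists_H_det_ne_zero hn hm A B C adj hconn F K
  refine ⟨H, fun q => ?_⟩
  set M : Matrix (Fin m × Fin n) (Fin m × Fin n) ℝ :=
    Atil A B F
      + ∑ i : Fin m, Btil n i * (K i * (C i * (Btil n i)ᵀ) + H i * Ctil n adj i)
    with hM
  have hdet := hH q
  have hunit : IsUnit (ctrbMat M (Btil n q) m) :=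
    (Matrix.isUnit_iff_isUnit_det _).mpr (Ne.isUnit hdet)
  have hrank_m : (ctrbMat M (Btil n q) m).rank = Fintype.card (Fin m × Fin n) :=
    Matrix.rank_of_isUnit _ hunit
  clear hunit
  set N := Fintype.card (Fin m × Fin n) with hN
  have hcard : N = m * n := by rw [hN]; simp
  have hmN : m ≤ N := by
    rw [hcard]
    exact Nat.le_mul_of_pos_right m hn
  set S : Matrix (Fin N × Fin n) (Fin m × Fin n) ℝ :=
    Matrix.of fun p r => if (p.1 : ℕ) = (r.1 : ℕ) ∧ p.2 = r.2 then 1 else 0 with hS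
  have hfac : ctrbMat M (Btil n q) N * S = ctrbMat M (Btil n q) m := by
    ext i r
    rw [Matrix.mul_apply]
    rw [Finset.sum_eq_single
      ((⟨(r.1 : ℕ), lt_of_lt_of_le r.1.2 hmN⟩, r.2) : Fin N × Fin n)]
    · have h1 : S ((⟨(r.1 : ℕ), lt_of_lt_of_le r.1.2 hmN⟩ : Fin N), r.2) r = 1 := by
        simp [hS]
      rw [h1, mul_one]
      rfl
    · intro p _ hp
      simp only [hS, Matrix.of_apply]
      rw [if_neg, mul_zero]
      intro hcond
      apply hp
      exact Prod.ext (Fin.ext hcond.1) hcond.2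
    · intro h; exact absurd (Finset.mem_univ _) h
  have hrank_N : (ctrbMat M (Btil n q) N).rank = N := by
    apply le_antisymm
    · have := Matrix.rank_le_card_height (ctrbMat M (Btil n q) N)
      rwa [← hN] at this
    · calc N = (ctrbMat M (Btil n q) m).rank := hrank_m.symm
        _ = (ctrbMat M (Btil n q) N * S).rank := by rw [hfac]
        _ ≤ (ctrbMat M (Btil n q) N).rank := Matrix.rank_mul_le_left _ _
  have hmem : m ∈ {k : ℕ | 0 < k ∧
      (ctrbMat M (Btil n q) k).rank = Fintype.card (Fin m × Fin n)} :=
    ⟨by omega, hrank_m⟩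
  have hlb : ∀ k ∈ {k : ℕ | 0 < k ∧
      (ctrbMat M (Btil n q) k).rank = Fintype.card (Fin m × Fin n)}, m ≤ k := by
    intro k hk
    have h1 : (ctrbMat M (Btil n q) k).rank ≤ Fintype.card (Fin k × Fin n) :=
      Matrix.rank_le_card_width _
    rw [hk.2] at h1
    simp only [Fintype.card_prod, Fintype.card_fin] at h1
    exact Nat.le_of_mul_le_mul_right h1 hn
  constructor
  · exact hrank_N
  · exact le_antisymm (Nat.sInf_le hmem) (hlb _ (Nat.sInf_mem ⟨m, hmem⟩))
end Perturb
end

section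
/- There exist matrices Ĥ_i ∈ ℝ^{n×nk_i}, i = 1,…,m (where k_i = |𝒩_i|), for which the matrix pair (Σ_{i=1}^m B̃_i Ĥ_i C̃_i, B̃_q) is controllable with controllability index m for every choice of q ∈ {1,…,m}. -/
open Matrix Finset

namespace Lem3Aux
open Polynomial

variable {m : ℕ}

def bar {R : Type*} [CommRing R] (a : Fin m → Fin m → R) : Matrix (Fin m) (Fin m) R :=
  Matrix.of fun i p => (if p = i then (∑ j, a i j) else 0) - a i p

def kry {R : Type*} [CommRing R] (a : Fin m → Fin m → R) (q : Fin m) :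
    Matrix (Fin m) (Fin m) R :=
  Matrix.of fun i k => ((bar a) ^ (k : ℕ)) i q

def ta (q : Fin m) (g : Fin m → Fin m) (lam : Fin m → ℝ) : Fin m → Fin m → ℝ :=
  fun i p => if i ≠ q ∧ p = g i then lam i else 0

lemma ta_rowsum (q : Fin m) (g : Fin m → Fin m) (lam : Fin m → ℝ)
    (hgq : ∀ i, i ≠ q → g i ≠ i) (hlamq : lam q = 0) (i : Fin m) :
    ∑ j, ta q g lam i j = lam i := by
  by_cases hiq : i = q
  · subst hiq
    simp [ta, hlamq]
  · rw [Finset.sum_eq_single (g i)]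
    · simp [ta, hiq]
    · intro b _ hb; simp [ta, hb]
    · intro h; exact absurd (Finset.mem_univ _) h

lemma bar_ta_apply (q : Fin m) (g : Fin m → Fin m) (lam : Fin m → ℝ)
    (hgq : ∀ i, i ≠ q → g i ≠ i) (hlamq : lam q = 0) (i p : Fin m) :
    bar (ta q g lam) i p = (if p = i then lam i else 0) - ta q g lam i p := by
  simp [bar, ta_rowsum q g lam hgq hlamq]

lemma bar_ta_diag (q : Fin m) (g : Fin m → Fin m) (lam : Fin m → ℝ)
    (hgq : ∀ i, i ≠ q → g i ≠ i) (hlamq : lam q = 0) (i : Fin m) :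
    bar (ta q g lam) i i = lam i := by
  rw [bar_ta_apply q g lam hgq hlamq]
  have : ta q g lam i i = 0 := by
    by_cases hiq : i = q
    · simp [ta, hiq]
    · simp only [ta, ite_eq_right_iff]
      intro h
      exact absurd h.2.symm (hgq i hiq)
  simp [this]

section Tri
variable (A : Matrix (Fin m) (Fin m) ℝ) (lam : Fin m → ℝ) (ρ : Fin m → ℕ)

/- abstract triangularity -/
lemma pow_tri (htri : ∀ i p, A i p ≠ 0 → ρ p ≤ ρ i) :
    ∀ (k : ℕ) (i p : Fin m), ρ i < ρ p → (A ^ k) i p = 0 := by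
  intro k
  induction k with
  | zero =>
    intro i p h
    have : i ≠ p := fun he => by simp [he] at h
    simp [Matrix.one_apply, this]
  | succ k ih =>
    intro i p h
    rw [pow_succ, Matrix.mul_apply]
    apply Finset.sum_eq_zero
    intro x _
    by_cases hx : ρ i < ρ x
    · rw [ih i x hx, zero_mul]
    · push_neg at hx
      have : A x p = 0 := by
        by_contra hne
        exact absurd (lt_of_le_of_lt hx (lt_of_lt_of_le h (htri _ _ hne))) (lt_irrefl _)
      rw [this, mul_zero]

lemma pow_diag (htri : ∀ i p, A i p ≠ 0 → ρ p ≤ ρ i) (hinj : Function.Injective ρ)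
    (hdiag : ∀ i, A i i = lam i) :
    ∀ (k : ℕ) (i : Fin m), (A ^ k) i i = lam i ^ k := by
  intro k
  induction k with
  | zero => simp [Matrix.one_apply]
  | succ k ih =>
    intro i
    rw [pow_succ, Matrix.mul_apply, Finset.sum_eq_single i]
    · rw [ih, hdiag, pow_succ]
    · intro x _ hx
      by_cases h : ρ i < ρ x
      · rw [pow_tri A ρ htri k i x h, zero_mul]
      · have : A x i = 0 := by
          by_contra hne
          have h1 := htri _ _ hne
          push_neg at h
          exact hx (hinj (le_antisymm h h1))
        rw [this, mul_zero]
    · intro h; exact absurd (Finset.mem_univ _) h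


lemma vanish (htri : ∀ i p, A i p ≠ 0 → ρ p ≤ ρ i) (hinj : Function.Injective ρ)
    (hdiag : ∀ i, A i i = lam i) :
    ∀ (N : ℕ) (w : Fin m → ℝ), (∀ i, w i ≠ 0 → ρ i < N) →
      w ᵥ* (aeval A (∏ l ∈ univ.filter (fun l => ρ l < N), (X - C (lam l)))) = 0 := by
  intro N
  induction N with
  | zero =>
    intro w hw
    have : w = 0 := by
      funext i
      by_contra h
      exact absurd (hw i h) (Nat.not_lt_zero _)
    rw [this, Matrix.zero_vecMul]
  | succ N ih =>
    intro w hw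
    by_cases hj : ∃ j, ρ j = N
    · obtain ⟨j, hjN⟩ := hj
      have hset : univ.filter (fun l => ρ l < N + 1)
          = insert j (univ.filter (fun l => ρ l < N)) := by
        ext l
        simp only [Finset.mem_filter, Finset.mem_univ, true_and, Finset.mem_insert]
        constructor
        · intro h
          rcases Nat.lt_succ_iff_lt_or_eq.mp h with h | h
          · exact Or.inr (by simp [h])
          · exact Or.inl (hinj (h.trans hjN.symm))
        · rintro (rfl | h)
          · omega
          · omega
      have hjnot : j ∉ univ.filter (fun l => ρ l < N) := by
        simp only [Finset.mem_filter, Finset.mem_univ, true_and]; omega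
      rw [hset, Finset.prod_insert hjnot, _root_.map_mul, ← Matrix.vecMul_vecMul]
      have haev : aeval A (X - C (lam j)) = A - lam j • 1 := by
        simp [map_sub, aeval_X, aeval_C, Algebra.algebraMap_eq_smul_one]
      set w' := w ᵥ* aeval A (X - C (lam j)) with hw'
      have hw'supp : ∀ p, w' p ≠ 0 → ρ p < N := by
        intro p hp
        by_contra hge
        push_neg at hge
        apply hp
        have hterm : ∀ i : Fin m, w i * (A - lam j • 1) i p
            = (if i = p then w p * (A p p - lam j) else 0) := by
          intro i
          by_cases hip : i = p
          · subst hip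
            simp [Matrix.sub_apply, Matrix.smul_apply, Matrix.one_apply]
          · simp only [hip, if_false]
            by_cases hwi : w i = 0
            · rw [hwi, zero_mul]
            · have h1 : ρ i < N + 1 := hw i hwi
              have hen : (A - lam j • 1) i p = A i p := by
                simp [Matrix.sub_apply, Matrix.smul_apply, Matrix.one_apply, hip]
              rw [hen]
              by_cases hA : A i p = 0
              · rw [hA, mul_zero]
              · have h2 := htri i p hA
                exact absurd (hinj (show ρ i = ρ p by omega)) hip
        have hsum : w' p = ∑ i, w i * (A - lam j • 1) i p := by
          rw [hw', haev]; simp [Matrix.vecMul, dotProduct]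
        rw [hsum, Finset.sum_congr rfl (fun i _ => hterm i), Finset.sum_ite_eq' univ p]
        simp only [Finset.mem_univ, if_true]
        by_cases hwp : w p = 0
        · rw [hwp, zero_mul]
        · have h1 : ρ p < N + 1 := hw p hwp
          have hpj : p = j := hinj (by omega)
          subst hpj
          rw [hdiag]
          simp
      exact ih w' hw'supp
    · push_neg at hj
      have hset : univ.filter (fun l => ρ l < N + 1) = univ.filter (fun l => ρ l < N) := by
        ext l
        simp only [Finset.mem_filter, Finset.mem_univ, true_and]
        have := hj l
        omega
      rw [hset]
      apply ih
      intro i hi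
      have h1 := hw i hi
      have := hj i
      omega

lemma aeval_full_eq_zero (htri : ∀ i p, A i p ≠ 0 → ρ p ≤ ρ i) (hinj : Function.Injective ρ)
    (hdiag : ∀ i, A i i = lam i) :
    aeval A (∏ l : Fin m, (X - C (lam l))) = 0 := by
  rcases Nat.eq_zero_or_pos m with hm | hm
  · subst hm; apply Matrix.ext; intro i; exact absurd i.2 (by omega)
  · set N := (univ.sup ρ) + 1 with hN
    have hall : ∀ l : Fin m, ρ l < N := fun l =>
      Nat.lt_succ_of_le (Finset.le_sup (Finset.mem_univ l))
    have hset : univ.filter (fun l => ρ l < N) = univ := by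
      ext l; simp [hall l]
    apply Matrix.ext
    intro i p
    have := vanish A lam ρ htri hinj hdiag N (Pi.single i 1) (by
      intro l hl
      by_cases h : l = i
      · subst h; exact hall l
      · simp [Pi.single_apply, h] at hl)
    rw [hset] at this
    have h2 := congrFun this p
    simpa [Matrix.vecMul, dotProduct, Pi.single_apply] using h2


end Tri

section Eigen
variable (q : Fin m) (g : Fin m → Fin m) (d : Fin m → ℕ) (lam : Fin m → ℝ)

lemma eigen_zero
    (hgq : g q = q)
    (hstep : ∀ i, i ≠ q → g i ≠ i ∧ d (g i) < d i)
    (hlamq : lam q = 0) (hlaminj : Function.Injective lam)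
    (u : Fin m → ℝ) (j : Fin m)
    (heig : u ᵥ* bar (ta q g lam) = lam j • u) (huq : u q = 0) : u j = 0 := by
  have hrowsum : ∀ i, ∑ p, ta q g lam i p = lam i := by
    intro i
    by_cases hiq : i = q
    · subst hiq; simp [ta, hlamq]
    · rw [Finset.sum_eq_single (g i)]
      · simp [ta, hiq]
      · intro b _ hb; simp [ta, hb]
      · intro h; exact absurd (Finset.mem_univ _) h
  -- the eigen-equation at each vertex
  have E : ∀ p : Fin m,
      ∑ i ∈ univ.filter (fun i => i ≠ q ∧ g i = p), u i * lam i
        = (lam p - lam j) * u p := by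
    intro p
    have h1 := congrFun heig p
    have h2 : (u ᵥ* bar (ta q g lam)) p
        = u p * lam p - ∑ i ∈ univ.filter (fun i => i ≠ q ∧ g i = p), u i * lam i := by
      have : ∀ i, u i * bar (ta q g lam) i p
          = u i * (if p = i then lam i else 0) - u i * ta q g lam i p := by
        intro i
        have : bar (ta q g lam) i p = (if p = i then lam i else 0) - ta q g lam i p := by
          simp only [bar, Matrix.of_apply, hrowsum]
        rw [this, mul_sub]
      simp only [Matrix.vecMul, dotProduct]
      rw [Finset.sum_congr rfl (fun i _ => this i), Finset.sum_sub_distrib]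
      congr 1
      · rw [Finset.sum_eq_single p]
        · rw [if_pos rfl]
        · intro b _ hb
          rw [if_neg (Ne.symm hb), mul_zero]
        · intro h; exact absurd (Finset.mem_univ _) h
      · rw [Finset.sum_filter]
        apply Finset.sum_congr rfl
        intro i _
        by_cases h : i ≠ q ∧ g i = p
        · have hta : ta q g lam i p = lam i := by
            simp only [ta, if_pos (And.intro h.1 h.2.symm)]
          rw [hta, if_pos h]
        · have : ta q g lam i p = 0 := by
            simp only [ta, ite_eq_right_iff]
            intro hc
            exact absurd ⟨hc.1, hc.2.symm⟩ h
          simp [h, this]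
    rw [h2] at h1
    have h3 : (lam j • u) p = lam j * u p := rfl
    rw [h3] at h1
    nlinarith [h1]
  -- claim 1 : u vanishes off the ancestor chain of j
  have claim1 : ∀ t : ℕ, ∀ p : Fin m, univ.sup d ≤ d p + t →
      (∀ s : ℕ, g^[s] j ≠ p) → u p = 0 := by
    intro t
    induction t with
    | zero =>
      intro p hp hnot
      have hempty : ∀ i ∈ univ.filter (fun i => i ≠ q ∧ g i = p), u i * lam i = 0 := by
        intro i hi
        simp only [Finset.mem_filter, Finset.mem_univ, true_and] at hi
        have h1 := (hstep i hi.1).2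
        rw [hi.2] at h1
        have h2 : d i ≤ univ.sup d := Finset.le_sup (Finset.mem_univ i)
        omega
      have h0 := E p
      rw [Finset.sum_eq_zero hempty] at h0
      have hpj : p ≠ j := fun h => hnot 0 (by simp [h])
      have : lam p - lam j ≠ 0 := fun h => hpj (hlaminj (by linarith [h]) ).symm
      have := (mul_eq_zero.mp h0.symm).resolve_left this
      exact this
    | succ t ih =>
      intro p hp hnot
      have hchild : ∀ i ∈ univ.filter (fun i => i ≠ q ∧ g i = p), u i * lam i = 0 := by
        intro i hi
        simp only [Finset.mem_filter, Finset.mem_univ, true_and] at hi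
        have h1 := (hstep i hi.1).2
        rw [hi.2] at h1
        have hui : u i = 0 := by
          apply ih i (by omega)
          intro s hs
          apply hnot (s+1)
          rw [Function.iterate_succ_apply', hs, hi.2]
        rw [hui, zero_mul]
      have h0 := E p
      rw [Finset.sum_eq_zero hchild] at h0
      have hpj : p ≠ j := fun h => hnot 0 (by simp [h])
      have : lam p - lam j ≠ 0 := fun h => hpj (hlaminj (by linarith [h])).symm
      exact (mul_eq_zero.mp h0.symm).resolve_left this
  by_cases hjq : j = q
  · rw [hjq]; exact huq
  · -- the chain from j to q
    have hqfix : ∀ s : ℕ, g^[s] q = q := by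
      intro s
      induction s with
      | zero => rfl
      | succ s ih => rw [Function.iterate_succ_apply', ih, hgq]
    have hreach : ∀ t : ℕ, ∀ x : Fin m, d x ≤ t → ∃ s, g^[s] x = q := by
      intro t
      induction t with
      | zero =>
        intro x hx
        by_cases hxq : x = q
        · exact ⟨0, hxq⟩
        · exact absurd (hstep x hxq).2 (by omega)
      | succ t ih =>
        intro x hx
        by_cases hxq : x = q
        · exact ⟨0, hxq⟩
        · obtain ⟨s, hs⟩ := ih (g x) (by have := (hstep x hxq).2; omega)
          exact ⟨s + 1, by rw [Function.iterate_succ_apply]; exact hs⟩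
    have hex : ∃ s, g^[s] j = q := hreach (d j) j le_rfl
    set S := Nat.find hex with hSdef
    have hS : g^[S] j = q := Nat.find_spec hex
    have hmin : ∀ s, s < S → g^[s] j ≠ q := fun s hs => Nat.find_min hex hs
    have hgeS : ∀ r, S ≤ r → g^[r] j = q := by
      intro r hr
      have : r = (r - S) + S := by omega
      rw [this, Function.iterate_add_apply, hS, hqfix]
    -- strict monotonicity of depth along the chain
    have hdec : ∀ s, s < S → d (g^[s+1] j) < d (g^[s] j) := by
      intro s hs
      rw [Function.iterate_succ_apply']
      exact (hstep _ (hmin s hs)).2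
    have hmono : ∀ s1 s2, s1 < s2 → s2 ≤ S → d (g^[s2] j) < d (g^[s1] j) := by
      intro s1 s2 h12 h2S
      have : ∀ k, s1 + k + 1 ≤ S → d (g^[s1 + k + 1] j) < d (g^[s1] j) := by
        intro k
        induction k with
        | zero => intro h; simpa using hdec s1 (by omega)
        | succ k ih =>
          intro h
          have h1 := hdec (s1 + k + 1) (by omega)
          have h2 := ih (by omega)
          calc d (g^[s1 + (k+1) + 1] j) < d (g^[s1 + k + 1] j) := by
                have : s1 + (k+1) + 1 = (s1 + k + 1) + 1 := by omega
                rw [this]; exact h1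
            _ < d (g^[s1] j) := h2
      have hk : s2 = s1 + (s2 - s1 - 1) + 1 := by omega
      rw [hk]; exact this _ (by omega)
    have hinjchain : ∀ s1 s2, s1 ≤ S → s2 ≤ S → g^[s1] j = g^[s2] j → s1 = s2 := by
      intro s1 s2 h1 h2 he
      by_contra hne
      rcases Nat.lt_or_ge s1 s2 with h | h
      · have := hmono s1 s2 h h2; rw [he] at this; omega
      · have h' : s2 < s1 := by omega
        have := hmono s2 s1 h' h1; rw [he] at this; omega
    have hchain : ∀ t, t ≤ S → u (g^[S - t] j) = 0 := by
      intro t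
      induction t with
      | zero => intro _; simpa [hS] using huq
      | succ t ih =>
        intro ht
        have hup : u (g^[(S - (t+1)) + 1] j) = 0 := by
          have : (S - (t+1)) + 1 = S - t := by omega
          rw [this]; exact ih (by omega)
        set s := S - (t + 1) with hs
        set c := g^[s] j with hc
        set p := g^[s+1] j with hp
        have hcq : c ≠ q := hmin s (by omega)
        have hgc : g c = p := by rw [hc, hp, Function.iterate_succ_apply']
        have hcmem : c ∈ univ.filter (fun i => i ≠ q ∧ g i = p) :=
          Finset.mem_filter.mpr ⟨Finset.mem_univ _, hcq, hgc⟩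
        have hsum : ∑ i ∈ univ.filter (fun i => i ≠ q ∧ g i = p), u i * lam i
            = u c * lam c := by
          apply Finset.sum_eq_single_of_mem c hcmem
          intro b hb hbc
          simp only [Finset.mem_filter, Finset.mem_univ, true_and] at hb
          have hub : u b = 0 := by
            apply claim1 (univ.sup d) b (by omega)
            intro r hr
            have hbq : b ≠ q := hb.1
            have hrS : r < S := by
              by_contra hge
              push_neg at hge
              exact hbq (by rw [← hr, hgeS r hge])
            have : g^[r+1] j = g^[s+1] j := by
              rw [Function.iterate_succ_apply', hr, hb.2, hp]
            have := hinjchain (r+1) (s+1) (by omega) (by omega) this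
            exact hbc (by rw [← hr]; congr 1; omega)
          rw [hub, zero_mul]
        have h0 := E p
        rw [hsum, hup, mul_zero] at h0
        have hlamc : lam c ≠ 0 := fun h => hcq (hlaminj (by rw [h, hlamq]))
        have : u c = 0 := by
          rcases mul_eq_zero.mp h0 with h | h
          · exact h
          · exact absurd h hlamc
        exact this
    have := hchain S le_rfl
    simpa using this

end Eigen

section TreeDet
variable (q : Fin m) (g : Fin m → Fin m) (d : Fin m → ℕ) (lam : Fin m → ℝ)

theorem tree_det_ne_zero
    (hgq : g q = q)
    (hstep : ∀ i, i ≠ q → g i ≠ i ∧ d (g i) < d i)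
    (hlamq : lam q = 0) (hlaminj : Function.Injective lam) :
    (kry (ta q g lam) q).det ≠ 0 := by
  set A := bar (ta q g lam) with hA
  have hgne : ∀ i, i ≠ q → g i ≠ i := fun i hi => (hstep i hi).1
  set ρ : Fin m → ℕ := fun i => d i * m + i.val with hρ
  have hρinj : Function.Injective ρ := by
    intro i j hij
    simp only [hρ] at hij
    have h1 : (d i * m + i.val) % m = i.val := by
      rw [Nat.add_comm, Nat.add_mul_mod_self_right]
      exact Nat.mod_eq_of_lt i.isLt
    have h2 : (d j * m + j.val) % m = j.val := by
      rw [Nat.add_comm, Nat.add_mul_mod_self_right]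
      exact Nat.mod_eq_of_lt j.isLt
    apply Fin.ext
    rw [← h1, ← h2, hij]
  have hρg : ∀ i, i ≠ q → ρ (g i) < ρ i := by
    intro i hi
    have h1 := (hstep i hi).2
    have h2 : (g i).val < m := (g i).isLt
    calc ρ (g i) < (d (g i) + 1) * m := by
          have he : (d (g i) + 1) * m = d (g i) * m + m := by ring
          simp only [hρ]; omega
      _ ≤ d i * m := Nat.mul_le_mul_right m (by omega)
      _ ≤ ρ i := Nat.le_add_right _ _
  have htri : ∀ i p, A i p ≠ 0 → ρ p ≤ ρ i := by
    intro i p hne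
    rw [hA, bar_ta_apply q g lam hgne hlamq] at hne
    by_cases hpi : p = i
    · subst hpi; exact le_refl _
    · rw [if_neg hpi, zero_sub, neg_ne_zero] at hne
      have : i ≠ q ∧ p = g i := by
        by_contra h
        exact hne (by simp only [ta, if_neg h])
      rw [this.2]
      exact le_of_lt (hρg i this.1)
  have hdiag : ∀ i, A i i = lam i := fun i => bar_ta_diag q g lam hgne hlamq i
  intro hdet
  obtain ⟨v, hvne, hv⟩ := Matrix.exists_vecMul_eq_zero_iff.mpr hdet
  have hks : ∀ k : ℕ, k < m → (v ᵥ* A ^ k) q = 0 := by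
    intro k hk
    have h1 := congrFun hv ⟨k, hk⟩
    have h2 : (v ᵥ* kry (ta q g lam) q) ⟨k, hk⟩ = (v ᵥ* A ^ k) q := by
      simp only [Matrix.vecMul, dotProduct, kry, Matrix.of_apply, hA]
    rw [h2] at h1
    exact h1
  -- top index of v
  have hSne : (univ.filter (fun i => v i ≠ 0)).Nonempty := by
    obtain ⟨i, hi⟩ := Function.ne_iff.mp hvne
    exact ⟨i, Finset.mem_filter.mpr ⟨Finset.mem_univ _, hi⟩⟩
  obtain ⟨j, hjmem, hjmax⟩ := Finset.exists_max_image _ ρ hSne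
  have hvj : v j ≠ 0 := (Finset.mem_filter.mp hjmem).2
  have hm1 : 1 ≤ m := by
    rcases Nat.eq_zero_or_pos m with h | h
    · exact absurd q.isLt (by omega)
    · omega
  set r : Polynomial ℝ := ∏ l ∈ univ.erase j, (X - C (lam l)) with hr
  set u := v ᵥ* aeval A r with hu
  have hfull : aeval A (∏ l : Fin m, (X - C (lam l))) = 0 :=
    aeval_full_eq_zero A lam ρ htri hρinj hdiag
  have heig : u ᵥ* A = lam j • u := by
    have hsplit : (X - C (lam j)) * r = ∏ l : Fin m, (X - C (lam l)) := by
      rw [hr]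
      exact Finset.mul_prod_erase univ (fun l => X - C (lam l)) (Finset.mem_univ j)
    have h1 : u ᵥ* aeval A (X - C (lam j)) = 0 := by
      rw [hu, Matrix.vecMul_vecMul, ← _root_.map_mul, mul_comm, hsplit, hfull,
        Matrix.vecMul_zero]
    have h2 : aeval A (X - C (lam j)) = A - lam j • 1 := by
      simp [map_sub, aeval_X, aeval_C, Algebra.algebraMap_eq_smul_one]
    rw [h2, Matrix.vecMul_sub] at h1
    have h3 : u ᵥ* ((lam j) • (1 : Matrix (Fin m) (Fin m) ℝ)) = lam j • u := by
      funext p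
      simp only [Matrix.vecMul, dotProduct, Matrix.smul_apply, Matrix.one_apply,
        Pi.smul_apply, smul_eq_mul]
      rw [Finset.sum_eq_single p]
      · simp [mul_comm]
      · intro b _ hb
        simp [hb]
      · intro h; exact absurd (Finset.mem_univ _) h
    rw [h3] at h1
    have := sub_eq_zero.mp h1
    exact this
  have hdeg : r.natDegree ≤ m - 1 := by
    calc r.natDegree ≤ ∑ l ∈ univ.erase j, (X - C (lam l)).natDegree :=
          Polynomial.natDegree_prod_le _ _
      _ = ∑ l ∈ univ.erase j, 1 := by
          apply Finset.sum_congr rfl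
          intro l _
          exact Polynomial.natDegree_X_sub_C _
      _ = m - 1 := by
          rw [Finset.sum_const, smul_eq_mul, mul_one, Finset.card_erase_of_mem
            (Finset.mem_univ j), Finset.card_univ, Fintype.card_fin]
  have haevalsum : aeval A r = ∑ k ∈ Finset.range (r.natDegree + 1), r.coeff k • A ^ k :=
    Polynomial.aeval_eq_sum_range (p := r) A
  have h2e : ∀ i p : Fin m, (aeval A r) i p
      = ∑ k ∈ Finset.range (r.natDegree + 1), r.coeff k * (A ^ k) i p := by
    intro i p
    rw [haevalsum, Matrix.sum_apply]
    exact Finset.sum_congr rfl (fun k _ => by rw [Matrix.smul_apply, smul_eq_mul])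
  have huq : u q = 0 := by
    calc u q = ∑ i, ∑ k ∈ Finset.range (r.natDegree + 1), v i * (r.coeff k * (A ^ k) i q) := by
          simp only [hu, Matrix.vecMul, dotProduct]
          exact Finset.sum_congr rfl (fun i _ => by rw [h2e i q, Finset.mul_sum])
      _ = ∑ k ∈ Finset.range (r.natDegree + 1), r.coeff k * ∑ i, v i * (A ^ k) i q := by
          rw [Finset.sum_comm]
          exact Finset.sum_congr rfl (fun k _ => by
            rw [Finset.mul_sum]
            exact Finset.sum_congr rfl (fun i _ => by ring))
      _ = 0 := by
          apply Finset.sum_eq_zero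
          intro k hk
          rw [Finset.mem_range] at hk
          have hkm : k < m := by omega
          have hz := hks k hkm
          have : ∑ i, v i * (A ^ k) i q = 0 := by
            simpa [Matrix.vecMul, dotProduct] using hz
          rw [this, mul_zero]
  have hrj : (aeval A r) j j = ∏ l ∈ univ.erase j, (lam j - lam l) := by
    have h1 : (aeval A r) j j
        = ∑ k ∈ Finset.range (r.natDegree + 1), r.coeff k * (lam j) ^ k := by
      rw [h2e j j]
      exact Finset.sum_congr rfl (fun k _ => by
        rw [pow_diag A lam ρ htri hρinj hdiag k j])
    rw [h1, ← Polynomial.eval_eq_sum_range, hr, Polynomial.eval_prod]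
    apply Finset.prod_congr rfl
    intro l _
    simp
  have hujne : u j ≠ 0 := by
    have h1 : u j = v j * (aeval A r) j j := by
      rw [hu]
      simp only [Matrix.vecMul, dotProduct]
      rw [Finset.sum_eq_single j]
      · intro b _ hb
        by_cases hvb : v b = 0
        · rw [hvb, zero_mul]
        · have hble : ρ b ≤ ρ j := hjmax b (Finset.mem_filter.mpr ⟨Finset.mem_univ _, hvb⟩)
          have hblt : ρ b < ρ j := lt_of_le_of_ne hble (fun h => hb (hρinj h))
          have : (aeval A r) b j = 0 := by
            rw [haevalsum, Matrix.sum_apply]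
            apply Finset.sum_eq_zero
            intro k _
            rw [Matrix.smul_apply, pow_tri A ρ htri k b j hblt, smul_zero]
          rw [this, mul_zero]
      · intro h; exact absurd (Finset.mem_univ _) h
    rw [h1, hrj]
    apply mul_ne_zero hvj
    rw [Finset.prod_ne_zero_iff]
    intro l hl
    have hlj : l ≠ j := (Finset.mem_erase.mp hl).1
    intro h
    exact hlj (hlaminj (by linarith [h]))
  exact hujne (eigen_zero q g d lam hgq hstep hlamq hlaminj u j heig huq)

end TreeDet

def reachN (step : Fin m → Fin m → Prop) (q : Fin m) : ℕ → Fin m → Prop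
  | 0 => fun i => i = q
  | (k+1) => fun i => reachN step q k i ∨ ∃ j, reachN step q k j ∧ step j i

theorem exists_tree (q : Fin m) (adj : Fin m → Fin m → Prop)
    (hconn : ∀ i j : Fin m, Relation.ReflTransGen adj i j) :
    ∃ (g : Fin m → Fin m) (d : Fin m → ℕ),
      g q = q ∧ ∀ i, i ≠ q → adj (g i) i ∧ g i ≠ i ∧ d (g i) < d i := by
  classical
  set step : Fin m → Fin m → Prop := fun x y => adj x y ∧ x ≠ y with hstepdef
  have hmono : ∀ k i, reachN step q k i → reachN step q (k+1) i := fun k i h => Or.inl h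
  have hex : ∀ i, ∃ k, reachN step q k i := by
    intro i
    have h := hconn q i
    induction h with
    | refl => exact ⟨0, rfl⟩
    | @tail b c hab hbc ih =>
      obtain ⟨k, hk⟩ := ih
      by_cases hbceq : b = c
      · exact ⟨k, hbceq ▸ hk⟩
      · exact ⟨k + 1, Or.inr ⟨b, hk, hbc, hbceq⟩⟩
  set d : Fin m → ℕ := fun i => sInf {k | reachN step q k i} with hd
  have hdmem : ∀ i, reachN step q (d i) i := fun i => Nat.sInf_mem (hex i)
  have hdle : ∀ i k, reachN step q k i → d i ≤ k := fun i k h => Nat.sInf_le h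
  have key : ∀ i, i ≠ q → ∃ j, (adj j i ∧ j ≠ i) ∧ d j < d i := by
    intro i hiq
    have h0 : d i ≠ 0 := by
      intro h
      have := hdmem i
      rw [h] at this
      exact hiq this
    obtain ⟨k, hk⟩ : ∃ k, d i = k + 1 := ⟨d i - 1, by omega⟩
    have hreach := hdmem i
    rw [hk] at hreach
    rcases hreach with h | ⟨j, hj, hstepj⟩
    · have := hdle i k h
      omega
    · refine ⟨j, hstepj, ?_⟩
      have := hdle j k hj
      omega
  refine ⟨fun i => if h : i = q then q else Classical.choose (key i h), d, by simp, ?_⟩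
  intro i hiq
  simp only [dif_neg hiq]
  obtain ⟨⟨h1, h2⟩, h3⟩ := Classical.choose_spec (key i hiq)
  exact ⟨h1, h2, h3⟩


lemma map_bar {R S : Type*} [CommRing R] [CommRing S] (f : R →+* S) (a : Fin m → Fin m → R) :
    (bar a).map f = bar (fun i j => f (a i j)) := by
  ext i p
  simp [bar, Matrix.map_apply, map_sub, apply_ite f, map_sum]

lemma map_kry {R S : Type*} [CommRing R] [CommRing S] (f : R →+* S) (a : Fin m → Fin m → R)
    (q : Fin m) : (kry a q).map f = kry (fun i j => f (a i j)) q := by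
  ext i k
  have hpow : ((bar a) ^ (k : ℕ)).map f = (bar fun i j => f (a i j)) ^ (k : ℕ) := by
    have h1 : ((bar a) ^ (k : ℕ)).map f = (f.mapMatrix (bar a)) ^ (k : ℕ) := by
      rw [← map_pow]
      rfl
    rw [h1]
    congr 1
    rw [RingHom.mapMatrix_apply, map_bar]
  simp only [kry, Matrix.map_apply, Matrix.of_apply]
  rw [show f ((bar a ^ (k:ℕ)) i q) = ((bar a ^ (k:ℕ)).map f) i q from rfl, hpow]


theorem exists_good_weights (adj : Fin m → Fin m → Prop) [DecidableRel adj]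
    (hconn : ∀ i j : Fin m, Relation.ReflTransGen adj i j) :
    ∃ a : Fin m → Fin m → ℝ,
      (∀ i j, a i j ≠ 0 → (adj j i ∧ j ≠ i)) ∧ ∀ q, (kry a q).det ≠ 0 := by
  classical
  set ap : Fin m → Fin m → MvPolynomial (Fin m × Fin m) ℝ :=
    fun i j => if adj j i ∧ j ≠ i then MvPolynomial.X (i, j) else 0 with hap
  have hfac : ∀ q : Fin m, (kry ap q).det ≠ 0 := by
    intro q
    obtain ⟨g, d, hgq, hstep⟩ := exists_tree q adj hconn
    set lam : Fin m → ℝ := fun i => if i = q then 0 else (i : ℕ) + 1 with hlam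
    have hlamq : lam q = 0 := by simp [hlam]
    have hlaminj : Function.Injective lam := by
      intro i j hij
      simp only [hlam] at hij
      by_cases hi : i = q <;> by_cases hj : j = q
      · rw [hi, hj]
      · rw [if_pos hi, if_neg hj] at hij
        exfalso
        have : ((j : ℕ) : ℝ) + 1 > 0 := by positivity
        linarith [hij]
      · rw [if_neg hi, if_pos hj] at hij
        exfalso
        have : ((i : ℕ) : ℝ) + 1 > 0 := by positivity
        linarith [hij]
      · rw [if_neg hi, if_neg hj] at hij
        have : ((i : ℕ) : ℝ) = ((j : ℕ) : ℝ) := by linarith [hij]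
        exact Fin.ext (by exact_mod_cast this)
    have hstep' : ∀ i, i ≠ q → g i ≠ i ∧ d (g i) < d i :=
      fun i hi => ⟨(hstep i hi).2.1, (hstep i hi).2.2⟩
    have hdet := tree_det_ne_zero q g d lam hgq hstep' hlamq hlaminj
    intro h0
    apply hdet
    set pt : Fin m × Fin m → ℝ := fun p => ta q g lam p.1 p.2 with hpt
    have hevalap : ∀ i j, MvPolynomial.eval pt (ap i j) = ta q g lam i j := by
      intro i j
      by_cases h : adj j i ∧ j ≠ i
      · simp only [hap, if_pos h, MvPolynomial.eval_X, hpt]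
      · simp only [hap, if_neg h, map_zero]
        symm
        simp only [ta, ite_eq_right_iff]
        rintro ⟨hiq, hgi⟩
        exfalso
        apply h
        rw [hgi]
        exact ⟨(hstep i hiq).1, (hstep i hiq).2.1⟩
    have hmap : (kry ap q).map (MvPolynomial.eval pt) = kry (ta q g lam) q := by
      rw [map_kry]
      have he : (fun i j => MvPolynomial.eval pt (ap i j)) = ta q g lam := by
        funext i j
        exact hevalap i j
      rw [he]
    have := congrArg (MvPolynomial.eval pt) h0
    rw [RingHom.map_det, map_zero, RingHom.mapMatrix_apply, hmap] at this
    exact this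
  set P : MvPolynomial (Fin m × Fin m) ℝ := ∏ q : Fin m, (kry ap q).det with hP
  have hPne : P ≠ 0 := Finset.prod_ne_zero_iff.mpr (fun q _ => hfac q)
  have hexx : ∃ x, MvPolynomial.eval x P ≠ 0 := by
    by_contra h
    push_neg at h
    exact hPne (MvPolynomial.funext (fun x => by rw [h x, map_zero]))
  obtain ⟨x, hx⟩ := hexx
  refine ⟨fun i j => MvPolynomial.eval x (ap i j), ?_, ?_⟩
  · intro i j hne
    by_contra h
    apply hne
    simp only [hap, if_neg h, map_zero]
  · intro q
    have hmap : (kry ap q).map (MvPolynomial.eval x)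
        = kry (fun i j => MvPolynomial.eval x (ap i j)) q := map_kry _ _ _
    have h1 : MvPolynomial.eval x ((kry ap q).det)
        = (kry (fun i j => MvPolynomial.eval x (ap i j)) q).det := by
      rw [RingHom.map_det, RingHom.mapMatrix_apply, hmap]
    rw [hP, map_prod] at hx
    have := Finset.prod_ne_zero_iff.mp hx q (Finset.mem_univ q)
    rw [h1] at this
    exact this

end Lem3Aux

/-- **Lemma 3.** There are matrices `Ĥᵢ` for which
`(Σᵢ B̃ᵢ Ĥᵢ C̃ᵢ, B̃_q)` is a controllable pair with controllability index `m`
for every choice of `q`. -/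
theorem exists_Hhat_controllable_index_m
    {n m : ℕ} (hn : 0 < n) (hm : 1 < m)
    (adj : Fin m → Fin m → Prop) [DecidableRel adj]
    (hself : ∀ i, adj i i)
    (hconn : ∀ i j : Fin m, Relation.ReflTransGen adj i j) :
    ∃ Hhat : ∀ i : Fin m, Matrix (Fin n) ({j // adj j i} × Fin n) ℝ,
      ∀ q : Fin m,
        Controllable (∑ i : Fin m, Btil n i * (Hhat i * Ctil n adj i)) (Btil n q)
        ∧ ctrlIndex (∑ i : Fin m, Btil n i * (Hhat i * Ctil n adj i)) (Btil n q) = m := by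
  classical
  obtain ⟨a, hsupp, hdet⟩ := Lem3Aux.exists_good_weights adj hconn
  set Ab := Lem3Aux.bar a with hAb
  set Hhat : ∀ i : Fin m, Matrix (Fin n) ({j // adj j i} × Fin n) ℝ :=
    fun i => Matrix.of fun k r => a i (r.1 : Fin m) * (if k = r.2 then (1:ℝ) else 0) with hHhat
  refine ⟨Hhat, ?_⟩
  intro q
  set Asum := ∑ i : Fin m, Btil n i * (Hhat i * Ctil n adj i) with hAsumdef
  have hblock : ∀ i : Fin m, Hhat i * Ctil n adj i
      = Matrix.of fun (k : Fin n) (p' : Fin m × Fin n) =>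
          Ab i p'.1 * (if k = p'.2 then (1:ℝ) else 0) := by
    intro i
    ext k p'
    rw [Matrix.mul_apply, Fintype.sum_prod_type]
    have hinner : ∀ j : {j // adj j i},
        ∑ l : Fin n, Hhat i k (j, l) * Ctil n adj i (j, l) p'
          = a i (j : Fin m) *
            ((if p'.1 = i then (1:ℝ) else 0) - (if p'.1 = (j : Fin m) then 1 else 0))
            * (if k = p'.2 then 1 else 0) := by
      intro j
      rw [Finset.sum_eq_single k]
      · simp only [hHhat, Matrix.of_apply, Ctil]
        by_cases hkp : k = p'.2 <;> simp [hkp] <;> ring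
      · intro l _ hl
        simp only [hHhat, Matrix.of_apply, Ctil]
        rw [if_neg (fun h => hl h.symm), mul_zero, zero_mul]
      · intro h; exact absurd (Finset.mem_univ _) h
    rw [Finset.sum_congr rfl (fun j _ => hinner j)]
    have hsubty : ∑ j : {j // adj j i},
        a i (j : Fin m) *
          ((if p'.1 = i then (1:ℝ) else 0) - (if p'.1 = (j : Fin m) then 1 else 0))
          * (if k = p'.2 then 1 else 0)
        = ∑ j : Fin m,
          a i j * ((if p'.1 = i then (1:ℝ) else 0) - (if p'.1 = j then 1 else 0))
            * (if k = p'.2 then 1 else 0) := by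
      rw [← Finset.sum_subtype (univ.filter (fun j => adj j i))
        (by intro x; simp) (fun j => a i j * ((if p'.1 = i then (1:ℝ) else 0)
          - (if p'.1 = j then 1 else 0)) * (if k = p'.2 then 1 else 0))]
      apply Finset.sum_subset (Finset.filter_subset _ _)
      intro x _ hx
      have hax : a i x = 0 := by
        by_contra h
        exact hx (Finset.mem_filter.mpr ⟨Finset.mem_univ _, (hsupp i x h).1⟩)
      rw [hax, zero_mul, zero_mul]
    rw [hsubty]
    have hfinal : ∑ j : Fin m,
        a i j * ((if p'.1 = i then (1:ℝ) else 0) - (if p'.1 = j then 1 else 0))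
          * (if k = p'.2 then 1 else 0)
        = Ab i p'.1 * (if k = p'.2 then 1 else 0) := by
      rw [← Finset.sum_mul]
      congr 1
      have h1 : ∀ j : Fin m,
          a i j * ((if p'.1 = i then (1:ℝ) else 0) - (if p'.1 = j then 1 else 0))
            = (if p'.1 = i then (1:ℝ) else 0) * a i j - (if p'.1 = j then a i j else 0) := by
        intro j
        by_cases h : p'.1 = j <;> by_cases h2 : p'.1 = i <;>
          simp [h, h2, mul_ite, mul_one, mul_zero] <;> split_ifs <;> ring
      rw [Finset.sum_congr rfl (fun j _ => h1 j), Finset.sum_sub_distrib, ← Finset.mul_sum,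
        Finset.sum_ite_eq univ p'.1 (fun j => a i j)]
      simp only [Finset.mem_univ, if_true]
      have h2 : Ab i p'.1 = (if p'.1 = i then (∑ j, a i j) else 0) - a i p'.1 := rfl
      rw [h2]
      by_cases h3 : p'.1 = i <;> simp [h3]
    rw [hfinal]
    rfl
  have hAsum : Asum = Matrix.kroneckerMap (· * ·) Ab (1 : Matrix (Fin n) (Fin n) ℝ) := by
    rw [hAsumdef]
    ext p p'
    rw [Matrix.sum_apply]
    have hterm : ∀ i, (Btil n i * (Hhat i * Ctil n adj i)) p p'
        = if p.1 = i then Ab i p'.1 * (if p.2 = p'.2 then (1:ℝ) else 0) else 0 := by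
      intro i
      rw [hblock i, Matrix.mul_apply, Finset.sum_eq_single p.2]
      · simp only [Btil, Matrix.of_apply]
        by_cases h : p.1 = i
        · simp [h]
        · simp [h]
      · intro l _ hl
        simp only [Btil, Matrix.of_apply]
        rw [if_neg (fun h => hl h.2.symm), zero_mul]
      · intro h; exact absurd (Finset.mem_univ _) h
    rw [Finset.sum_congr rfl (fun i _ => hterm i),
      Finset.sum_ite_eq univ p.1 (fun i => Ab i p'.1 * (if p.2 = p'.2 then (1:ℝ) else 0))]
    simp [Matrix.kroneckerMap_apply, Matrix.one_apply]
  have hpow : ∀ k : ℕ, Asum ^ k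
      = Matrix.kroneckerMap (· * ·) (Ab ^ k) (1 : Matrix (Fin n) (Fin n) ℝ) := by
    intro k
    induction k with
    | zero =>
      rw [pow_zero, pow_zero]
      exact (Matrix.one_kronecker_one).symm
    | succ k ih =>
      rw [pow_succ, pow_succ, ih, hAsum, ← Matrix.mul_kronecker_mul, Matrix.one_mul]
  have hctrb : ∀ k : ℕ, ctrbMat Asum (Btil n q) k
      = Matrix.of fun (p : Fin m × Fin n) (c : Fin k × Fin n) =>
          (Ab ^ (c.1 : ℕ)) p.1 q * (if p.2 = c.2 then (1:ℝ) else 0) := by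
    intro k
    ext p c
    show ((Asum ^ (c.1 : ℕ)) * Btil n q) p c.2 = _
    rw [hpow, Matrix.mul_apply, Finset.sum_eq_single ((q, c.2) : Fin m × Fin n)]
    · simp [Btil, Matrix.kroneckerMap_apply, Matrix.one_apply]
    · intro b _ hb
      simp only [Btil, Matrix.of_apply]
      by_cases h : b.1 = q ∧ b.2 = c.2
      · exact absurd (Prod.ext h.1 h.2) hb
      · rw [if_neg h, mul_zero]
    · intro h; exact absurd (Finset.mem_univ _) h
  have hcm : ctrbMat Asum (Btil n q) m
      = Matrix.kroneckerMap (· * ·) (Lem3Aux.kry a q) (1 : Matrix (Fin n) (Fin n) ℝ) := by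
    rw [hctrb m]
    ext p c
    simp [Lem3Aux.kry, Matrix.kroneckerMap_apply, Matrix.one_apply, hAb]
  have hdetm : (ctrbMat Asum (Btil n q) m).det ≠ 0 := by
    rw [hcm, Matrix.det_kronecker]
    simp only [Matrix.det_one, one_pow, mul_one]
    exact pow_ne_zero _ (hdet q)
  have hrankm : (ctrbMat Asum (Btil n q) m).rank = m * n := by
    have h1 := Matrix.rank_of_isUnit (ctrbMat Asum (Btil n q) m)
      ((Matrix.isUnit_iff_isUnit_det _).mpr (isUnit_iff_ne_zero.mpr hdetm))
    rw [h1]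
    simp
  have hsel : ∀ K : ℕ, m ≤ K → ∃ E : Matrix (Fin K × Fin n) (Fin m × Fin n) ℝ,
      ctrbMat Asum (Btil n q) K * E = ctrbMat Asum (Btil n q) m := by
    intro K hK
    refine ⟨Matrix.of fun c c' => if (c.1 : ℕ) = (c'.1 : ℕ) ∧ c.2 = c'.2 then (1:ℝ) else 0, ?_⟩
    ext p c'
    rw [Matrix.mul_apply, Finset.sum_eq_single
      (((⟨(c'.1 : ℕ), by omega⟩ : Fin K), c'.2) : Fin K × Fin n)]
    · simp only [Matrix.of_apply, ctrbMat]
      norm_num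
    · intro b _ hb
      simp only [Matrix.of_apply]
      by_cases h : (b.1 : ℕ) = (c'.1 : ℕ) ∧ b.2 = c'.2
      · exact absurd (Prod.ext (Fin.ext h.1) h.2) hb
      · rw [if_neg h, mul_zero]
    · intro h; exact absurd (Finset.mem_univ _) h
  have hcard : Fintype.card (Fin m × Fin n) = m * n := by simp
  have hctrl : Controllable Asum (Btil n q) := by
    unfold Controllable
    rw [hcard]
    have hKge : m ≤ m * n := Nat.le_mul_of_pos_right m hn
    obtain ⟨E, hE⟩ := hsel (m * n) hKge
    have h2 : (ctrbMat Asum (Btil n q) m).rank ≤ (ctrbMat Asum (Btil n q) (m * n)).rank := by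
      rw [← hE]
      exact Matrix.rank_mul_le_left _ _
    have h3 : (ctrbMat Asum (Btil n q) (m * n)).rank ≤ m * n := by
      have h := Matrix.rank_le_card_height (ctrbMat Asum (Btil n q) (m * n))
      simpa using h
    omega
  refine ⟨hctrl, ?_⟩
  unfold ctrlIndex
  have hmem : m ∈ {k | 0 < k ∧ (ctrbMat Asum (Btil n q) k).rank
      = Fintype.card (Fin m × Fin n)} := by
    refine ⟨by omega, ?_⟩
    rw [hrankm, hcard]
  apply le_antisymm
  · exact Nat.sInf_le hmem
  · apply le_csInf ⟨m, hmem⟩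
    intro k hk
    obtain ⟨hk0, hkr⟩ := hk
    have h1 : (ctrbMat Asum (Btil n q) k).rank ≤ k * n := by
      have h := Matrix.rank_le_card_width (ctrbMat Asum (Btil n q) k)
      simpa using h
    rw [hkr, hcard] at h1
    exact Nat.le_of_mul_le_mul_right h1 hn
end

section
/- Fix q ∈ {1,…,m} and let b_q denote the q-th standard unit vector of ℝ^m. There exists a matrix G = [g_{ij}] ∈ ℝ^{m×m} whose row sums are all zero and with g_{ij} = 0 whenever j is not a neighbor of i (i.e., whenever ℕ has no arc from j to i), such that the pair (G, b_q) is controllable. -/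
open Matrix Finset

namespace GEx

variable {m : ℕ}

/-- weights: `0` at `q`, otherwise `j+1`. -/
noncomputable def w (q j : Fin m) : ℝ := if j = q then 0 else (j : ℕ) + 1

lemma w_q (q : Fin m) : w q q = 0 := if_pos rfl

lemma w_ne_zero {q j : Fin m} (h : j ≠ q) : w q j ≠ 0 := by
  simp only [w, if_neg h]
  positivity

lemma w_inj {q j1 j2 : Fin m} (h1 : j1 ≠ q) (hne : j1 ≠ j2) : w q j1 ≠ w q j2 := by
  by_cases h2 : j2 = q
  · rw [h2, w_q]; exact w_ne_zero h1
  · simp only [w, if_neg h1, if_neg h2]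
    intro h
    have h' : ((j1 : ℕ) : ℝ) = ((j2 : ℕ) : ℝ) := by linarith
    exact hne (Fin.val_injective (Nat.cast_injective h'))

/-- the tree matrix -/
noncomputable def Gmat (q : Fin m) (par : Fin m → Fin m) : Matrix (Fin m) (Fin m) ℝ :=
  Matrix.of fun i j =>
    if i = q then 0 else (if j = par i then w q i else 0) - (if j = i then w q i else 0)

section Path

variable (q : Fin m) (par : Fin m → Fin m) {ρ : Fin m → ℕ}

lemma exists_iter (hρ : ∀ j, j ≠ q → ρ (par j) < ρ j) (k : Fin m) :
    ∃ t, par^[t] k = q := by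
  suffices h : ∀ n k, ρ k ≤ n → ∃ t, par^[t] k = q from h (ρ k) k le_rfl
  intro n
  induction n with
  | zero =>
    intro k hk
    by_cases hkq : k = q
    · exact ⟨0, hkq⟩
    · exact absurd (hρ k hkq) (by omega)
  | succ n ih =>
    intro k hk
    by_cases hkq : k = q
    · exact ⟨0, hkq⟩
    · obtain ⟨t, ht⟩ := ih (par k) (by have := hρ k hkq; omega)
      exact ⟨t + 1, by rwa [Function.iterate_succ_apply]⟩

variable {k : Fin m}

/-- length of the path from `k` to the root `q`. -/
noncomputable def pT (h : ∃ t, par^[t] k = q) : ℕ := Nat.find h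

lemma pT_spec (h : ∃ t, par^[t] k = q) : par^[pT q par h] k = q := Nat.find_spec h

lemma pT_min (h : ∃ t, par^[t] k = q) {t : ℕ} (ht : t < pT q par h) :
    par^[t] k ≠ q := Nat.find_min h ht

lemma pT_zero_iff (h : ∃ t, par^[t] k = q) : pT q par h = 0 ↔ k = q := by
  rw [pT, Nat.find_eq_zero]; rfl

lemma path_step (hρ : ∀ j, j ≠ q → ρ (par j) < ρ j) (h : ∃ t, par^[t] k = q)
    {t : ℕ} (ht : t < pT q par h) :
    ρ (par^[t + 1] k) < ρ (par^[t] k) := by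
  rw [Function.iterate_succ_apply']
  exact hρ _ (pT_min q par h ht)

lemma path_lt (hρ : ∀ j, j ≠ q → ρ (par j) < ρ j) (h : ∃ t, par^[t] k = q) :
    ∀ {s t : ℕ}, s < t → t ≤ pT q par h → ρ (par^[t] k) < ρ (par^[s] k) := by
  intro s t
  induction t with
  | zero => omega
  | succ t ih =>
    intro hst htT
    have hstep : ρ (par^[t + 1] k) < ρ (par^[t] k) := path_step q par hρ h (by omega)
    rcases Nat.lt_succ_iff_lt_or_eq.mp hst with hc | hc
    · exact hstep.trans (ih hc (by omega))
    · rw [hc]; exact hstep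

lemma path_inj (hρ : ∀ j, j ≠ q → ρ (par j) < ρ j) (h : ∃ t, par^[t] k = q)
    {s t : ℕ} (hs : s ≤ pT q par h) (ht : t ≤ pT q par h)
    (heq : par^[s] k = par^[t] k) : s = t := by
  rcases lt_trichotomy s t with hc | hc | hc
  · have := path_lt q par hρ h hc ht; rw [heq] at this; omega
  · exact hc
  · have := path_lt q par hρ h hc hs; rw [heq] at this; omega

end Path


/-- coefficients of the left eigenvector along the path from `k` to `q`. -/
noncomputable def cs (q : Fin m) (par : Fin m → Fin m) (k : Fin m) : ℕ → ℝ
  | 0 => 1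
  | t + 1 =>
    if par^[t + 1] k = q then -(w q (par^[t] k) * cs q par k t) / w q k
    else (w q (par^[t] k) * cs q par k t) / (w q (par^[t + 1] k) - w q k)

section Cov

variable (q : Fin m) (par : Fin m → Fin m) {ρ : Fin m → ℕ} {k : Fin m}
variable (h : ∃ t, par^[t] k = q)

lemma k_ne_q_of_pos (ht : 0 < pT q par h) : k ≠ q := by
  intro hkq
  rw [← pT_zero_iff q par h] at hkq
  omega

lemma denom_ne (hρ : ∀ j, j ≠ q → ρ (par j) < ρ j) (t : ℕ) (ht : t ≤ pT q par h) (htq : par^[t] k ≠ q) (htp : 0 < t) :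
    w q (par^[t] k) - w q k ≠ 0 := by
  refine sub_ne_zero.mpr (w_inj htq ?_)
  intro heq
  have := path_inj q par hρ h ht (Nat.zero_le _) (by simpa using heq)
  omega

lemma cs_ne (hρ : ∀ j, j ≠ q → ρ (par j) < ρ j) (t : ℕ) (ht : t ≤ pT q par h) : cs q par k t ≠ 0 := by
  induction t with
  | zero => exact one_ne_zero
  | succ t ih =>
    have hct := ih (by omega)
    have hat : par^[t] k ≠ q := pT_min q par h (by omega)
    have hwat : w q (par^[t] k) ≠ 0 := w_ne_zero hat
    rw [cs]
    by_cases hq : par^[t + 1] k = q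
    · rw [if_pos hq]
      have hkq : k ≠ q := k_ne_q_of_pos q par h (by omega)
      exact div_ne_zero (neg_ne_zero.mpr (mul_ne_zero hwat hct)) (w_ne_zero hkq)
    · rw [if_neg hq]
      exact div_ne_zero (mul_ne_zero hwat hct) (denom_ne q par h hρ (t+1) ht hq (by omega))

lemma crel1 (hρ : ∀ j, j ≠ q → ρ (par j) < ρ j) (t : ℕ) (ht : t + 1 ≤ pT q par h) (hq : par^[t + 1] k ≠ q) :
    cs q par k (t + 1) * (w q (par^[t + 1] k) - w q k) = w q (par^[t] k) * cs q par k t := by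
  rw [cs, if_neg hq]
  exact div_mul_cancel₀ _ (denom_ne q par h hρ (t+1) ht hq (by omega))

lemma crel2 (hρ : ∀ j, j ≠ q → ρ (par j) < ρ j) (t : ℕ) (ht : t + 1 ≤ pT q par h) (hq : par^[t + 1] k = q) :
    w q k * cs q par k (t + 1) = -(w q (par^[t] k) * cs q par k t) := by
  rw [cs, if_pos hq]
  exact mul_div_cancel₀ _ (w_ne_zero (k_ne_q_of_pos q par h (by omega)))

/-- the left eigenvector of `Gmat` for eigenvalue `-(w q k)`. -/
noncomputable def vv : Fin m → ℝ := fun j =>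
  ∑ t ∈ Finset.range (pT q par h + 1), if par^[t] k = j then cs q par k t else 0

lemma vv_q : vv q par h q = cs q par k (pT q par h) := by
  rw [vv, Finset.sum_eq_single_of_mem (pT q par h) (by simp)]
  · rw [if_pos (pT_spec q par h)]
  · intro t htm htne
    rw [if_neg (pT_min q par h (by simp at htm; omega))]


lemma vv_vecMul (hρ : ∀ j, j ≠ q → ρ (par j) < ρ j) :
    Matrix.vecMul (vv q par h) (Gmat q par) = fun j => -(w q k) * vv q par h j := by
  funext j
  have step1 : Matrix.vecMul (vv q par h) (Gmat q par) j
      = ∑ t ∈ Finset.range (pT q par h + 1), cs q par k t * Gmat q par (par^[t] k) j := by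
    simp only [Matrix.vecMul, dotProduct, vv, Finset.sum_mul]
    rw [Finset.sum_comm]
    refine Finset.sum_congr rfl fun t _ => ?_
    rw [Finset.sum_eq_single (par^[t] k)]
    · rw [if_pos rfl]
    · intro b _ hb
      rw [if_neg fun hc => hb hc.symm, zero_mul]
    · intro hmem
      exact absurd (Finset.mem_univ _) hmem
  have hGq : Gmat q par q j = 0 := by simp [Gmat]
  rw [step1, Finset.sum_range_succ, pT_spec q par h, hGq, mul_zero, add_zero]
  have hsum : ∑ t ∈ Finset.range (pT q par h), cs q par k t * Gmat q par (par^[t] k) j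
      = (∑ t ∈ Finset.range (pT q par h),
            if j = par^[t+1] k then cs q par k t * w q (par^[t] k) else 0)
        - ∑ t ∈ Finset.range (pT q par h),
            if j = par^[t] k then cs q par k t * w q (par^[t] k) else 0 := by
    rw [← Finset.sum_sub_distrib]
    refine Finset.sum_congr rfl fun t htm => ?_
    rw [Finset.mem_range] at htm
    have hat : par^[t] k ≠ q := pT_min q par h htm
    rw [Gmat]
    simp only [Matrix.of_apply, if_neg hat, ← Function.iterate_succ_apply' par t k]
    rw [mul_sub]
    congr 1 <;> simp [mul_ite] <;> by_cases hc : j = par^[t] (par k) <;> simp [hc]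
  rw [hsum]
  simp only [vv]
  by_cases hj : ∃ s, s ≤ pT q par h ∧ par^[s] k = j
  · obtain ⟨s, hsT, hsj⟩ := hj
    have huniq : ∀ t, t ≤ pT q par h → par^[t] k = j → t = s := fun t htT hc =>
      path_inj q par hρ h htT hsT (hc.trans hsj.symm)
    have hRs : (∑ t ∈ Finset.range (pT q par h + 1), if par^[t] k = j then cs q par k t else 0)
        = cs q par k s := by
      rw [Finset.sum_eq_single_of_mem s (Finset.mem_range.mpr (by omega))]
      · rw [if_pos hsj]
      · intro t htm htne
        rw [Finset.mem_range] at htm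
        exact if_neg fun hc => htne (huniq t (by omega) hc)
    rw [hRs]
    rcases Nat.eq_zero_or_pos s with hs0 | hspos
    · subst hs0
      have hA : (∑ t ∈ Finset.range (pT q par h),
          if j = par^[t+1] k then cs q par k t * w q (par^[t] k) else 0) = 0 := by
        refine Finset.sum_eq_zero fun t htm => ?_
        rw [Finset.mem_range] at htm
        exact if_neg fun hc => by have := huniq (t+1) (by omega) hc.symm; omega
      rw [hA]
      by_cases hT0 : pT q par h = 0
      · have hkq : k = q := (pT_zero_iff q par h).mp hT0
        rw [hT0]
        simp [hkq, w_q]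
      · have hB : (∑ t ∈ Finset.range (pT q par h),
            if j = par^[t] k then cs q par k t * w q (par^[t] k) else 0)
            = cs q par k 0 * w q (par^[0] k) := by
          rw [Finset.sum_eq_single_of_mem 0 (Finset.mem_range.mpr (by omega))]
          · rw [if_pos hsj.symm]
          · intro t htm htne
            rw [Finset.mem_range] at htm
            exact if_neg fun hc => htne (huniq t (by omega) hc.symm)
        rw [hB]
        simp only [Function.iterate_zero_apply] at hsj ⊢
        ring
    · obtain ⟨s', rfl⟩ : ∃ s', s = s' + 1 := ⟨s - 1, by omega⟩
      have hA : (∑ t ∈ Finset.range (pT q par h),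
          if j = par^[t+1] k then cs q par k t * w q (par^[t] k) else 0)
          = cs q par k s' * w q (par^[s'] k) := by
        rw [Finset.sum_eq_single_of_mem s' (Finset.mem_range.mpr (by omega))]
        · rw [if_pos hsj.symm]
        · intro t htm htne
          rw [Finset.mem_range] at htm
          exact if_neg fun hc => by have := huniq (t+1) (by omega) hc.symm; omega
      rw [hA]
      by_cases hsT' : s' + 1 < pT q par h
      · have hB : (∑ t ∈ Finset.range (pT q par h),
            if j = par^[t] k then cs q par k t * w q (par^[t] k) else 0)
            = cs q par k (s'+1) * w q (par^[s'+1] k) := by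
          rw [Finset.sum_eq_single_of_mem (s'+1) (Finset.mem_range.mpr hsT')]
          · rw [if_pos hsj.symm]
          · intro t htm htne
            rw [Finset.mem_range] at htm
            exact if_neg fun hc => htne (huniq t (by omega) hc.symm)
        rw [hB]
        have hq' : par^[s'+1] k ≠ q := pT_min q par h hsT'
        have hrel := crel1 q par h hρ s' hsT hq'
        linarith [hrel]
      · have hsT'' : s' + 1 = pT q par h := by omega
        have hB : (∑ t ∈ Finset.range (pT q par h),
            if j = par^[t] k then cs q par k t * w q (par^[t] k) else 0) = 0 := by
          refine Finset.sum_eq_zero fun t htm => ?_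
          rw [Finset.mem_range] at htm
          exact if_neg fun hc => by have := huniq t (by omega) hc.symm; omega
        rw [hB]
        have hq' : par^[s'+1] k = q := by rw [hsT'']; exact pT_spec q par h
        have hrel := crel2 q par h hρ s' hsT hq'
        linarith [hrel]
  · push_neg at hj
    have hA : (∑ t ∈ Finset.range (pT q par h),
        if j = par^[t+1] k then cs q par k t * w q (par^[t] k) else 0) = 0 := by
      refine Finset.sum_eq_zero fun t htm => ?_
      rw [Finset.mem_range] at htm
      exact if_neg fun hc => hj (t+1) (by omega) hc.symm
    have hB : (∑ t ∈ Finset.range (pT q par h),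
        if j = par^[t] k then cs q par k t * w q (par^[t] k) else 0) = 0 := by
      refine Finset.sum_eq_zero fun t htm => ?_
      rw [Finset.mem_range] at htm
      exact if_neg fun hc => hj t (by omega) hc.symm
    have hR : (∑ t ∈ Finset.range (pT q par h + 1),
        if par^[t] k = j then cs q par k t else 0) = 0 := by
      refine Finset.sum_eq_zero fun t htm => ?_
      rw [Finset.mem_range] at htm
      exact if_neg fun hc => hj t (by omega) hc
    rw [hA, hB, hR]
    ring


lemma vv_vecMul_pow (hρ : ∀ j, j ≠ q → ρ (par j) < ρ j) (t : ℕ) :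
    Matrix.vecMul (vv q par h) (Gmat q par ^ t)
      = fun j => (-(w q k)) ^ t * vv q par h j := by
  induction t with
  | zero =>
    funext j
    simp [Matrix.vecMul_one]
  | succ t ih =>
    rw [pow_succ, ← Matrix.vecMul_vecMul, ih]
    have hfun : (fun j => (-(w q k)) ^ t * vv q par h j)
        = ((-(w q k)) ^ t) • vv q par h := by
      funext j; simp [smul_eq_mul]
    rw [hfun, Matrix.smul_vecMul, vv_vecMul q par h hρ]
    funext j
    simp [smul_eq_mul, pow_succ]
    ring

end Cov

section Master

variable (q : Fin m) (par : Fin m → Fin m) {ρ : Fin m → ℕ}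

lemma master (hρ : ∀ j, j ≠ q → ρ (par j) < ρ j) :
    (Matrix.of fun i (p : Fin m × Fin 1) =>
        ((Gmat q par ^ (p.1 : ℕ)) *
          Matrix.of fun i (_ : Fin 1) => if i = q then (1:ℝ) else 0) i p.2).rank = m := by
  classical
  set B : Matrix (Fin m) (Fin 1) ℝ :=
    Matrix.of fun i (_ : Fin 1) => if i = q then (1:ℝ) else 0 with hB
  set M : Matrix (Fin m) (Fin m × Fin 1) ℝ :=
    Matrix.of (fun i (p : Fin m × Fin 1) => ((Gmat q par ^ (p.1 : ℕ)) * B) i p.2) with hM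
  have hMe : ∀ i (p : Fin m × Fin 1), M i p = (Gmat q par ^ (p.1 : ℕ)) i q := by
    intro i p
    simp only [hM, Matrix.of_apply, Matrix.mul_apply, hB, mul_ite, mul_one, mul_zero]
    rw [Finset.sum_ite_eq' Finset.univ q]
    simp
  have hinj : ∀ a : Fin m × Fin 1 → ℝ, M.mulVec a = 0 → a = 0 := by
    intro a ha
    set x : Fin m → ℝ := fun k => -(w q k) with hx
    have hxinj : Function.Injective x := by
      intro k1 k2 heq
      have heq' : w q k1 = w q k2 := neg_injective heq
      by_contra hne
      by_cases h1 : k1 = q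
      · have h2 : k2 ≠ q := fun hc => hne (h1.trans hc.symm)
        exact w_ne_zero h2 (by rw [← heq', h1, w_q])
      · exact w_inj h1 hne heq'
    have hvdm : (Matrix.vandermonde x).mulVec (fun t => a (t, 0)) = 0 := by
      funext k
      have hex : ∃ t, par^[t] k = q := exists_iter q par hρ k
      have hvq : vv q par hex q ≠ 0 := by
        rw [vv_q]
        exact cs_ne q par hex hρ _ le_rfl
      have h0 : vv q par hex ⬝ᵥ (M.mulVec a) = 0 := by rw [ha, dotProduct_zero]
      rw [Matrix.dotProduct_mulVec] at h0
      have hvM : Matrix.vecMul (vv q par hex) M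
          = fun p : Fin m × Fin 1 => (-(w q k)) ^ (p.1 : ℕ) * vv q par hex q := by
        funext p
        have := congrFun (vv_vecMul_pow q par hex hρ (p.1 : ℕ)) q
        calc Matrix.vecMul (vv q par hex) M p
            = ∑ i, vv q par hex i * M i p := by
              simp [Matrix.vecMul, dotProduct]
          _ = ∑ i, vv q par hex i * (Gmat q par ^ (p.1 : ℕ)) i q := by
              refine Finset.sum_congr rfl fun i _ => ?_
              rw [hMe]
          _ = Matrix.vecMul (vv q par hex) (Gmat q par ^ (p.1 : ℕ)) q := by
              simp [Matrix.vecMul, dotProduct]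
          _ = (-(w q k)) ^ (p.1 : ℕ) * vv q par hex q := this
      rw [hvM] at h0
      have h0' : vv q par hex q * (∑ t : Fin m, x k ^ (t : ℕ) * a (t, 0)) = 0 := by
        rw [← h0]
        simp only [dotProduct, Fintype.sum_prod_type, Fin.sum_univ_one, Finset.mul_sum]
        refine Finset.sum_congr rfl fun t _ => ?_
        rw [hx]
        ring
      have h0'' := (mul_eq_zero.mp h0').resolve_left hvq
      simp only [Matrix.mulVec, dotProduct, Matrix.vandermonde]
      simpa using h0''
    have hdet : (Matrix.vandermonde x).det ≠ 0 :=
      Matrix.det_vandermonde_ne_zero_iff.mpr hxinj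
    have hvinj : Function.Injective (Matrix.vandermonde x).mulVec :=
      Matrix.mulVec_injective_iff_isUnit.mpr
        ((Matrix.isUnit_iff_isUnit_det _).mpr (isUnit_iff_ne_zero.mpr hdet))
    have ha' : (fun t => a (t, 0)) = 0 := hvinj (by rw [hvdm, Matrix.mulVec_zero])
    funext p
    obtain ⟨t, j⟩ := p
    have hj : j = 0 := Subsingleton.elim j 0
    rw [hj]
    exact congrFun ha' t
  have hker : LinearMap.ker M.mulVecLin = ⊥ :=
    LinearMap.ker_eq_bot'.mpr fun a ha => hinj a (by rwa [Matrix.mulVecLin_apply] at ha)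
  have hrn := LinearMap.finrank_range_add_finrank_ker M.mulVecLin
  rw [hker, finrank_bot, add_zero] at hrn
  show Module.finrank ℝ (LinearMap.range M.mulVecLin) = m
  rw [hrn, Module.finrank_fintype_fun_eq_card]
  simp

end Master

section Reach

def reachN (adj : Fin m → Fin m → Prop) (q : Fin m) : ℕ → Fin m → Prop
  | 0, j => j = q
  | n + 1, j => reachN adj q n j ∨ ∃ i, reachN adj q n i ∧ adj i j

lemma reach_exists {adj : Fin m → Fin m → Prop} {q j : Fin m}
    (hconn : Relation.ReflTransGen adj q j) : ∃ n, reachN adj q n j := by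
  induction hconn with
  | refl => exact ⟨0, rfl⟩
  | tail _ hadj ih =>
    obtain ⟨n, hn⟩ := ih
    exact ⟨n + 1, Or.inr ⟨_, hn, hadj⟩⟩

lemma exists_parent (adj : Fin m → Fin m → Prop) (q : Fin m)
    (hconn : ∀ j, Relation.ReflTransGen adj q j) :
    ∃ (par : Fin m → Fin m) (ρ : Fin m → ℕ),
      (∀ j, j ≠ q → adj (par j) j) ∧ (∀ j, j ≠ q → ρ (par j) < ρ j) := by
  classical
  have hc : ∀ j, ∃ n, reachN adj q n j := fun j => reach_exists (hconn j)
  set d : Fin m → ℕ := fun j => Nat.find (hc j) with hd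
  have key : ∀ j, j ≠ q → ∃ i, adj i j ∧ d i < d j := by
    intro j hj
    have hspec : reachN adj q (d j) j := Nat.find_spec (hc j)
    have hpos : d j ≠ 0 := by
      intro h0
      rw [h0] at hspec
      exact hj hspec
    obtain ⟨n, hn⟩ := Nat.exists_eq_succ_of_ne_zero hpos
    rw [hn] at hspec
    rcases hspec with hr | ⟨i, hi, hadj⟩
    · have : d j ≤ n := Nat.find_le hr
      omega
    · have hdi : d i ≤ n := Nat.find_le hi
      exact ⟨i, hadj, by omega⟩
  have key' : ∀ j, ∃ i, j ≠ q → adj i j ∧ d i < d j := by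
    intro j
    by_cases hj : j = q
    · exact ⟨q, fun h' => absurd hj h'⟩
    · exact ⟨(key j hj).choose, fun _ => (key j hj).choose_spec⟩
  choose par hpar using key'
  exact ⟨par, d, fun j hj => (hpar j hj).1, fun j hj => (hpar j hj).2⟩

end Reach

end GEx

theorem exists_G_controllable'
    {m : ℕ} (hm : 1 < m)
    (adj : Fin m → Fin m → Prop) [DecidableRel adj]
    (hself : ∀ i, adj i i)
    (hconn : ∀ i j : Fin m, Relation.ReflTransGen adj i j)
    (q : Fin m) :
    ∃ G : Matrix (Fin m) (Fin m) ℝ,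
      (∀ i, ∑ j, G i j = 0)
      ∧ (∀ i j, ¬ adj j i → G i j = 0)
      ∧ (Matrix.of fun i (p : Fin m × Fin 1) =>
          ((G ^ (p.1 : ℕ)) *
            Matrix.of fun i (_ : Fin 1) => if i = q then (1:ℝ) else 0) i p.2).rank = m := by
  classical
  obtain ⟨par, ρ, hadj, hρ⟩ := GEx.exists_parent adj q (fun j => hconn q j)
  refine ⟨GEx.Gmat q par, ?_, ?_, GEx.master q par hρ⟩
  · intro i
    by_cases hi : i = q
    · simp [GEx.Gmat, hi]
    · have hpar_ne : par i ≠ i := fun hc => by have := hρ i hi; rw [hc] at this; omega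
      simp only [GEx.Gmat, Matrix.of_apply, if_neg hi]
      rw [Finset.sum_sub_distrib,
        Finset.sum_ite_eq' Finset.univ (par i), Finset.sum_ite_eq' Finset.univ i]
      simp
  · intro i j hnadj
    by_cases hi : i = q
    · simp [GEx.Gmat, hi]
    · simp only [GEx.Gmat, Matrix.of_apply, if_neg hi]
      have h1 : j ≠ par i := fun hc => hnadj (hc ▸ hadj i hi)
      have h2 : j ≠ i := fun hc => hnadj (hc ▸ hself i)
      rw [if_neg h1, if_neg h2, sub_zero]

/-- **Lemma 4 / `G-exists`.** For a strongly connected neighbor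
graph with self-loops, there is a matrix `G` with zero row sums, sparsity
pattern compatible with the graph, such that `(G, b_q)` is controllable. -/
theorem exists_G_controllable
    {m : ℕ} (hm : 1 < m)
    (adj : Fin m → Fin m → Prop) [DecidableRel adj]
    (hself : ∀ i, adj i i)
    (hconn : ∀ i j : Fin m, Relation.ReflTransGen adj i j)
    (q : Fin m) :
    ∃ G : Matrix (Fin m) (Fin m) ℝ,
      (∀ i, ∑ j, G i j = 0)
      ∧ (∀ i j, ¬ adj j i → G i j = 0)
      ∧ Controllable G
          (Matrix.of fun i (_ : Fin 1) => if i = q then (1 : ℝ) else 0) := by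
  obtain ⟨G, h1, h2, h3⟩ := exists_G_controllable' hm adj hself hconn q
  refine ⟨G, h1, h2, ?_⟩
  unfold Controllable ctrbMat
  rw [show Fintype.card (Fin m) = m from Fintype.card_fin m]
  exact h3
end

section
/- Let 𝕋_q be a directed spanning tree of the strongly connected directed graph ℕ rooted at vertex q with all arcs oriented away from q, and for each vertex i ≠ q let ρ_i denote the unique in-neighbor (parent) of i in 𝕋_q. Choose v ∈ ℝ^m with v_q = 0 and with v_1,…,v_m pairwise distinct and v_i ≠ 0 for all i ≠ q. Define G = [g_{ij}] ∈ ℝ^{m×m} by g_{ii} = v_i for all i, g_{iρ_i} = −v_i for all i ≠ q, and g_{ij} = 0 otherwise. Then the pair (G, b_q) is controllable, where b_q is the q-th standard unit vector of ℝ^m. -/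
/-!
Each vertex `i` carries a left eigenvector of `G` for the eigenvalue `v i`, supported on the
path `i, ρ i, …, q` to the root; its `q`-th entry is the product of the values of `v` on that
path below the root, hence nonzero. Pairing a relation `∑ₖ gₖ • Gᵏ b_q = 0` (`k < m`) with
these eigenvectors shows that `∑ₖ gₖ Xᵏ` vanishes at the `m` distinct eigenvalues `v i`, a
Vandermonde system, so `g = 0`: the Krylov vectors `Gᵏ b_q` are independent.
-/

open Matrix Finset

theorem Matrix.vecMul_pow_eq_smul {R ι : Type*} [CommSemiring R] [Fintype ι] [DecidableEq ι]
    {A : Matrix ι ι R} {w : ι → R} {μ : R} (h : w ᵥ* A = μ • w) (k : ℕ) :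
    w ᵥ* (A ^ k) = μ ^ k • w := by
  induction k with
  | zero => simp
  | succ k ih => rw [pow_succ, ← vecMul_vecMul, ih, smul_vecMul, h, smul_smul, pow_succ]

theorem linearIndependent_pow_mulVec_of_left_eigenvectors {K ι : Type*} [Field K] [Fintype ι]
    [DecidableEq ι] {A : Matrix ι ι K} {b : ι → K} {μ : ι → K} (hμ : Function.Injective μ)
    {w : ι → ι → K} (hw : ∀ i, w i ᵥ* A = μ i • w i) (hwb : ∀ i, w i ⬝ᵥ b ≠ 0) :
    LinearIndependent K fun k : Fin (Fintype.card ι) => (A ^ (k : ℕ)) *ᵥ b := by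
  rw [Fintype.linearIndependent_iff]
  intro g hg
  have hroots : ∀ i, ∑ k : Fin (Fintype.card ι), μ i ^ (k : ℕ) * g k = 0 := by
    intro i
    have h := congrArg (w i ⬝ᵥ ·) hg
    simp only [dotProduct_sum, dotProduct_smul, dotProduct_mulVec, vecMul_pow_eq_smul (hw i),
      smul_dotProduct, dotProduct_zero, smul_eq_mul] at h
    have hpoly : (∑ k : Fin (Fintype.card ι), μ i ^ (k : ℕ) * g k) * (w i ⬝ᵥ b) = 0 := by
      rw [sum_mul, ← h]
      exact sum_congr rfl fun k _ => by ring
    exact (mul_eq_zero.1 hpoly).resolve_right (hwb i)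
  set e := Fintype.equivFin ι
  have hdet : (vandermonde (μ ∘ e.symm)).det ≠ 0 :=
    det_vandermonde_ne_zero_iff.2 (hμ.comp e.symm.injective)
  have hg0 := eq_zero_of_mulVec_eq_zero hdet (v := g) (funext fun j => hroots (e.symm j))
  exact congrFun hg0

theorem controllable_replicateCol_of_linearIndependent {ι κ : Type*} [Fintype ι] [DecidableEq ι]
    [Fintype κ] [Nonempty κ] {A : Matrix ι ι ℝ} {b : ι → ℝ}
    (h : LinearIndependent ℝ fun k : Fin (Fintype.card ι) => (A ^ (k : ℕ)) *ᵥ b) :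
    Controllable A (replicateCol κ b) := by
  have hcols : (ctrbMat A (replicateCol κ b) (Fintype.card ι)).col =
      (fun k : Fin (Fintype.card ι) => (A ^ (k : ℕ)) *ᵥ b) ∘ Prod.fst := by
    ext ⟨k, c⟩ i
    simp [ctrbMat, replicateCol, Matrix.mul_apply, mulVec, dotProduct]
  rw [Controllable, rank_eq_finrank_span_cols, hcols, Prod.fst_surjective.range_comp,
    finrank_span_eq_card h, Fintype.card_fin]

theorem Finset.sum_range_succ_smul_sub {R M : Type*} [CommRing R] [AddCommGroup M] [Module R M]
    (a : ℕ → R) (e : ℕ → M) (d : ℕ) :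
    ∑ n ∈ range (d + 1), a n • (e n - e (n + 1)) =
      a 0 • e 0 + ∑ n ∈ range d, (a (n + 1) - a n) • e (n + 1) - a d • e (d + 1) := by
  induction d with
  | zero => simp [smul_sub]
  | succ d ih =>
    rw [sum_range_succ, ih, sum_range_succ]
    module

section TreeMatrix

variable {R ι : Type*} [CommRing R] {q : ι} {ρ : ι → ι} {v : ι → R}

-- Clearing denominators in the recursion
-- `c (n + 1) = c n * v (ρ^[n] i) / (v (ρ^[n + 1] i) - v i)` of the left eigen-equation.
variable (ρ v) in
def pathWeight (i : ι) (d n : ℕ) : R :=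
  (∏ s ∈ range n, v (ρ^[s] i)) * ∏ s ∈ Ico (n + 1) (d + 1), (v (ρ^[s] i) - v i)

theorem pathWeight_succ_mul {i : ι} {d n : ℕ} (hn : n < d) :
    pathWeight ρ v i d (n + 1) * (v (ρ^[n + 1] i) - v i) =
      pathWeight ρ v i d n * v (ρ^[n] i) := by
  rw [pathWeight, pathWeight, prod_range_succ,
    prod_eq_prod_Ico_succ_bot (by omega : n + 1 < d + 1)]
  ring

variable [DecidableEq ι]

variable (q ρ v) in
def treeMatrix : Matrix ι ι R :=
  of fun i j => if j = i then v i else if i ≠ q ∧ j = ρ i then -(v i) else 0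

theorem treeMatrix_row (hvq : v q = 0) (hρ : ∀ i, i ≠ q → ρ i ≠ i) (i : ι) :
    (treeMatrix q ρ v).row i = v i • (Pi.single i 1 - Pi.single (ρ i) 1) := by
  ext j
  by_cases hi : i = q
  · subst hi
    simp [treeMatrix, hvq]
  · have := hρ i hi
    simp only [treeMatrix, row_apply, of_apply, Pi.smul_apply, Pi.sub_apply, Pi.single_apply]
    split_ifs <;> simp_all

variable (ρ v) in
def pathLeftEigvec (i : ι) (d : ℕ) : ι → R :=
  ∑ n ∈ range (d + 1), pathWeight ρ v i d n • Pi.single (ρ^[n] i) 1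

theorem pathLeftEigvec_vecMul [Fintype ι] (hvq : v q = 0) (hρ : ∀ i, i ≠ q → ρ i ≠ i)
    {i : ι} {d : ℕ} (hd : ρ^[d] i = q) :
    pathLeftEigvec ρ v i d ᵥ* treeMatrix q ρ v = v i • pathLeftEigvec ρ v i d := by
  have hrow : ∀ n, (pathWeight ρ v i d n • Pi.single (ρ^[n] i) 1) ᵥ* treeMatrix q ρ v =
      (pathWeight ρ v i d n * v (ρ^[n] i)) •
        (Pi.single (ρ^[n] i) 1 - Pi.single (ρ^[n + 1] i) (1 : R)) := by
    intro n
    rw [smul_vecMul, single_one_vecMul, treeMatrix_row hvq hρ, smul_smul,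
      Function.iterate_succ_apply']
  rw [pathLeftEigvec, sum_vecMul, sum_congr rfl fun n _ => hrow n, sum_range_succ_smul_sub,
    hd, hvq, mul_zero, zero_smul, sub_zero, sum_range_succ', smul_add, smul_sum, add_comm]
  congr 1
  · refine sum_congr rfl fun n hn => ?_
    rw [smul_smul, ← pathWeight_succ_mul (mem_range.1 hn)]
    congr 1
    ring
  · rw [smul_smul, Function.iterate_zero_apply, mul_comm]

theorem pathLeftEigvec_apply_root {i : ι} {d : ℕ} (hd : ρ^[d] i = q)
    (hmin : ∀ n < d, ρ^[n] i ≠ q) :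
    pathLeftEigvec ρ v i d q = ∏ s ∈ range d, v (ρ^[s] i) := by
  rw [pathLeftEigvec, Finset.sum_apply, sum_eq_single d]
  · simp [pathWeight, hd]
  · intro n hn hnd
    have : ρ^[n] i ≠ q := hmin n (by rw [mem_range] at hn; omega)
    simp [this]
  · simp

end TreeMatrix

theorem tree_matrix_controllable_general {m : ℕ} (q : Fin m) (ρ : Fin m → Fin m)
    (hρne : ∀ i, i ≠ q → ρ i ≠ i)
    (hρroot : ∀ i : Fin m, ∃ k : ℕ, ρ^[k] i = q)
    (v : Fin m → ℝ)
    (hvq : v q = 0)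
    (hvdist : Function.Injective v)
    (hvne : ∀ i, i ≠ q → v i ≠ 0) :
    Controllable
      (Matrix.of fun i j : Fin m =>
        if j = i then v i else if i ≠ q ∧ j = ρ i then -(v i) else 0)
      (Matrix.of fun i (_ : Fin 1) => if i = q then (1 : ℝ) else 0) := by
  let depth i := Nat.find (hρroot i)
  have hdepth : ∀ i, ρ^[depth i] i = q := fun i => Nat.find_spec (hρroot i)
  have hmin : ∀ i, ∀ n < depth i, ρ^[n] i ≠ q := fun i n hn => Nat.find_min (hρroot i) hn
  change Controllable (treeMatrix q ρ v) (replicateCol (Fin 1) fun i => if i = q then 1 else 0)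
  refine controllable_replicateCol_of_linearIndependent
    (linearIndependent_pow_mulVec_of_left_eigenvectors hvdist
      (w := fun i => pathLeftEigvec ρ v i (depth i))
      (fun i => pathLeftEigvec_vecMul hvq hρne (hdepth i)) fun i => ?_)
  simp only [dotProduct, mul_ite, mul_one, mul_zero, sum_ite_eq', mem_univ, if_true]
  rw [pathLeftEigvec_apply_root (hdepth i) (hmin i)]
  exact prod_ne_zero_iff.2 fun s hs => hvne _ (hmin i s (mem_range.1 hs))

/-- Given a directed spanning tree of the strongly connected
graph `ℕ` rooted at `q` with arcs oriented away from `q` (encoded by the parent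
map `ρ`), and values `v` with `v_q = 0`, pairwise distinct and nonzero off the
root, the matrix `G` with `g_{ii} = vᵢ`, `g_{iρᵢ} = −vᵢ` (`i ≠ q`) and zeros
elsewhere makes `(G, b_q)` a controllable pair. -/
theorem tree_matrix_controllable
    {m : ℕ} (hm : 1 < m)
    (adj : Fin m → Fin m → Prop)
    (hconn : ∀ i j : Fin m, Relation.ReflTransGen adj i j)
    (q : Fin m) (ρ : Fin m → Fin m)
    (hρadj : ∀ i, i ≠ q → adj (ρ i) i)
    (hρne : ∀ i, i ≠ q → ρ i ≠ i)
    (hρroot : ∀ i : Fin m, ∃ k : ℕ, ρ^[k] i = q)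
    (v : Fin m → ℝ)
    (hvq : v q = 0)
    (hvdist : Function.Injective v)
    (hvne : ∀ i, i ≠ q → v i ≠ 0) :
    Controllable
      (Matrix.of fun i j : Fin m =>
        if j = i then v i else if i ≠ q ∧ j = ρ i then -(v i) else 0)
      (Matrix.of fun i (_ : Fin 1) => if i = q then (1 : ℝ) else 0) :=
  tree_matrix_controllable_general q ρ hρne hρroot v hvq hvdist hvne
end

section
/- Let (A, B) be a real matrix pair with A ∈ ℝ^{n×n} and B ∈ ℝ^{n×r} that is controllable with controllability index m. Then for each real matrix M ∈ ℝ^{n×n}, the matrix pair (M + gA, B) is controllable with controllability index no greater than m for all but at most finitely many values of the real scalar g. -/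
open Matrix Finset

/-! The controllability matrix of the pencil `t • M + A` has entries polynomial in `t`, so its
Gram determinant is a polynomial in `t`. It does not vanish at `t = 0`, where the pencil is `A`
and the rank at step `m` is full, so it has finitely many roots. For `g ≠ 0` we have
`M + g • A = g • (g⁻¹ • M + A)`, and scaling the system matrix by `g` scales its block `Xᵏ B`
by `gᵏ`, which does not change the rank. -/

open Polynomial

theorem Matrix.rank_eq_card_iff_det_ne_zero {K ι : Type*} [Field K] [Fintype ι]
    [DecidableEq ι] {A : Matrix ι ι K} : A.rank = Fintype.card ι ↔ A.det ≠ 0 := by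
  refine ⟨fun h => ?_, rank_of_det_ne_zero⟩
  have hrange : LinearMap.range A.mulVecLin = ⊤ :=
    Submodule.eq_top_of_finrank_eq (by simpa [Matrix.rank] using h)
  exact (isUnit_iff_isUnit_det A).mp
    (mulVec_surjective_iff_isUnit.mp (LinearMap.range_eq_top.mp hrange)) |>.ne_zero

theorem Polynomial.finite_setOf_rank_map_eval_ne_card {K ι κ : Type*} [Field K] [LinearOrder K]
    [IsStrictOrderedRing K] [Fintype ι] [DecidableEq ι] [Fintype κ]
    (Q : Matrix ι κ K[X]) {t₀ : K} (h₀ : (Q.map (eval t₀)).rank = Fintype.card ι) :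
    {t | (Q.map (eval t)).rank ≠ Fintype.card ι}.Finite := by
  set P := (Q * Qᵀ).det
  have hP : ∀ t, P.eval t = (Q.map (eval t) * (Q.map (eval t))ᵀ).det := fun t => by
    change evalRingHom t (Q * Qᵀ).det = _
    rw [RingHom.map_det, RingHom.mapMatrix_apply, Matrix.map_mul, Matrix.transpose_map]
    rfl
  have hP₀ : P ≠ 0 := fun h =>
    rank_eq_card_iff_det_ne_zero.mp ((rank_self_mul_transpose _).trans h₀)
      (by rw [← hP, h, eval_zero])
  refine P.roots.toFinset.finite_toSet.subset fun t ht => ?_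
  simp only [Multiset.mem_toFinset, Finset.mem_coe, mem_roots hP₀, IsRoot.def, hP]
  by_contra hdet
  exact ht ((rank_self_mul_transpose _).symm.trans (rank_eq_card_iff_det_ne_zero.mpr hdet))

section Controllability

variable {ι κ : Type*} [Fintype ι] [DecidableEq ι]

theorem exists_polynomial_ctrbMat_pencil (M A : Matrix ι ι ℝ) (B : Matrix ι κ ℝ) (k : ℕ) :
    ∃ Q : Matrix ι (Fin k × κ) ℝ[X], ∀ t : ℝ, Q.map (eval t) = ctrbMat (t • M + A) B k := by
  set Z : Matrix ι ι ℝ[X] := (X : ℝ[X]) • M.map C + A.map C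
  have hZ : ∀ t, (evalRingHom t).mapMatrix Z = t • M + A := fun t => by
    ext i j
    simp only [Z, RingHom.mapMatrix_apply, coe_evalRingHom, map_apply, Matrix.add_apply,
      Matrix.smul_apply, smul_eq_mul, eval_add, eval_mul, eval_C, eval_X]
  refine ⟨of fun i p => (Z ^ (p.1 : ℕ) * B.map C) i p.2, fun t => ?_⟩
  ext i p
  have hB : (B.map C).map (evalRingHom t) = B := by ext; simp
  have := congr_fun₂ (Matrix.map_mul (f := evalRingHom t) (L := Z ^ (p.1 : ℕ)) (M := B.map C)) i p.2
  rw [hB, ← RingHom.mapMatrix_apply, map_pow, hZ] at this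
  exact this

variable [Fintype κ]

theorem rank_ctrbMat_mono (X : Matrix ι ι ℝ) (B : Matrix ι κ ℝ) {k l : ℕ} (h : k ≤ l) :
    (ctrbMat X B k).rank ≤ (ctrbMat X B l).rank := by
  have : ctrbMat X B k = (ctrbMat X B l).submatrix id (Prod.map (Fin.castLE h) id) := rfl
  rw [this]
  exact rank_submatrix_le _ _ _

theorem rank_ctrbMat_smul (X : Matrix ι ι ℝ) (B : Matrix ι κ ℝ) (k : ℕ) {c : ℝ} (hc : c ≠ 0) :
    (ctrbMat (c • X) B k).rank = (ctrbMat X B k).rank := by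
  classical
  have : ctrbMat (c • X) B k = ctrbMat X B k * diagonal (fun p : Fin k × κ => c ^ (p.1 : ℕ)) := by
    ext i p
    rw [mul_diagonal]
    simp [ctrbMat, _root_.smul_pow, mul_comm]
  rw [this, rank_mul_eq_left_of_det_ne_zero]
  rw [det_diagonal]
  exact prod_ne_zero_iff.mpr fun p _ => pow_ne_zero _ hc

variable {X : Matrix ι ι ℝ} {B : Matrix ι κ ℝ}

theorem Controllable.rank_ctrbMat_max_one_card (h : Controllable X B) :
    (ctrbMat X B (max 1 (Fintype.card ι))).rank = Fintype.card ι :=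
  le_antisymm (rank_le_card_height _)
    (h.symm.trans_le (rank_ctrbMat_mono X B (le_max_right _ _)))

theorem Controllable.ctrlIndex_spec (h : Controllable X B) :
    0 < ctrlIndex X B ∧ (ctrbMat X B (ctrlIndex X B)).rank = Fintype.card ι :=
  Nat.sInf_mem (s := {k | 0 < k ∧ (ctrbMat X B k).rank = Fintype.card ι})
    ⟨_, lt_max_of_lt_left one_pos, h.rank_ctrbMat_max_one_card⟩

-- `max 1` because a pair on a zero-dimensional space has controllability index `1`.
theorem Controllable.ctrlIndex_le (h : Controllable X B) :
    ctrlIndex X B ≤ max 1 (Fintype.card ι) :=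
  Nat.sInf_le ⟨lt_max_of_lt_left one_pos, h.rank_ctrbMat_max_one_card⟩

theorem ctrlIndex_le_of_rank_ctrbMat {k : ℕ} (hk : 0 < k)
    (h : (ctrbMat X B k).rank = Fintype.card ι) : ctrlIndex X B ≤ k :=
  Nat.sInf_le ⟨hk, h⟩

theorem controllable_of_rank_ctrbMat {k : ℕ} (hk : k ≤ max 1 (Fintype.card ι))
    (h : (ctrbMat X B k).rank = Fintype.card ι) : Controllable X B := by
  refine le_antisymm (rank_le_card_height _) ?_
  rcases Nat.eq_zero_or_pos (Fintype.card ι) with h₀ | hpos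
  · simp [h₀]
  · exact h.symm.trans_le (rank_ctrbMat_mono X B (by omega))

end Controllability

/-- **Lemma 5, first part.** If `(A, B)` is controllable with
controllability index `m`, then for each real matrix `M`, the pair `(M + gA, B)`
is controllable with controllability index no greater than `m` for all but at
most finitely many real scalars `g`. -/
theorem controllable_perturbation
    {n r : ℕ} (A : Matrix (Fin n) (Fin n) ℝ) (B : Matrix (Fin n) (Fin r) ℝ)
    (m : ℕ)
    (hc : Controllable A B) (hidx : ctrlIndex A B = m)
    (M : Matrix (Fin n) (Fin n) ℝ) :
    {g : ℝ | ¬ (Controllable (M + g • A) B ∧ ctrlIndex (M + g • A) B ≤ m)}.Finite := by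
  obtain ⟨hm₀, hm⟩ := hidx ▸ hc.ctrlIndex_spec
  have hm_le : m ≤ max 1 (Fintype.card (Fin n)) := hidx ▸ hc.ctrlIndex_le
  obtain ⟨Q, hQ⟩ := exists_polynomial_ctrbMat_pencil M A B m
  have hbad : {t : ℝ | (ctrbMat (t • M + A) B m).rank ≠ Fintype.card (Fin n)}.Finite := by
    simpa only [hQ] using
      finite_setOf_rank_map_eval_ne_card Q (t₀ := 0) (by rwa [hQ, zero_smul, zero_add])
  refine (hbad.inv.insert 0).subset fun g hg_bad => ?_
  by_contra hgood
  obtain ⟨hg₀, hg⟩ : g ≠ 0 ∧ (ctrbMat (g⁻¹ • M + A) B m).rank = Fintype.card (Fin n) := by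
    simpa [not_or] using hgood
  have hrank : (ctrbMat (M + g • A) B m).rank = Fintype.card (Fin n) := by
    rwa [show M + g • A = g • (g⁻¹ • M + A) by rw [smul_add, smul_inv_smul₀ hg₀],
      rank_ctrbMat_smul _ _ _ hg₀]
  exact hg_bad ⟨controllable_of_rank_ctrbMat hm_le hrank, ctrlIndex_le_of_rank_ctrbMat hm₀ hrank⟩
end

section
/- Let A ∈ ℝ^{n×n} and C ∈ ℝ^{m×n} (with rows c_1,…,c_m) be such that the pair (C, A) is observable. Define the augmented matrices Ã = [[A, 0_{n×m}],[C, 0_{m×m}]] ∈ ℝ^{(n+m)×(n+m)} and C̃ = [0_{m×n}, I_m] ∈ ℝ^{m×(n+m)}. Then the pair (C̃, Ã) is observable. -/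
open Matrix Finset

lemma rank_eq_card_iff_surj {ι κ : Type*} [Fintype ι] [DecidableEq ι] [Fintype κ]
    (M : Matrix ι κ ℝ) :
    M.rank = Fintype.card ι ↔ Function.Surjective M.mulVecLin := by
  rw [← LinearMap.range_eq_top, Matrix.rank]
  constructor
  · intro h
    apply Submodule.eq_top_of_finrank_eq
    rw [h, Module.finrank_fintype_fun_eq_card]
  · intro h
    rw [h, finrank_top, Module.finrank_fintype_fun_eq_card]

lemma ctrb_rank_cast {ι κ : Type*} [Fintype ι] [DecidableEq ι] [Fintype κ]
    (A : Matrix ι ι ℝ) (B : Matrix ι κ ℝ) {k l : ℕ} (h : k = l) :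
    (ctrbMat A B k).rank = (ctrbMat A B l).rank := by subst h; rfl

/-- If `(C, A)` is observable, then the augmented pair
`(C̃, Ã)` with `Ã = [[A, 0], [C, 0]]` and `C̃ = [0, I]` is observable. -/
theorem augmented_observable
    {n m : ℕ} (A : Matrix (Fin n) (Fin n) ℝ) (C : Matrix (Fin m) (Fin n) ℝ)
    (hobs : Observable C A) :
    Observable
      (Matrix.fromCols (0 : Matrix (Fin m) (Fin n) ℝ)
        (1 : Matrix (Fin m) (Fin m) ℝ))
      (Matrix.fromBlocks A (0 : Matrix (Fin n) (Fin m) ℝ)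
        C (0 : Matrix (Fin m) (Fin m) ℝ)) := by
  classical
  unfold Observable Controllable at hobs ⊢
  have hobs' : (ctrbMat Aᵀ Cᵀ n).rank = n := by
    rw [ctrb_rank_cast Aᵀ Cᵀ (Fintype.card_fin n).symm, hobs, Fintype.card_fin]
  simp only [fromBlocks_transpose, transpose_fromCols, transpose_zero, transpose_one]
  rw [ctrb_rank_cast _ _ (show Fintype.card (Fin n ⊕ Fin m) = n + m by simp),
    show Fintype.card (Fin n ⊕ Fin m) = n + m by simp]
  rcases Nat.eq_zero_or_pos m with hm | hm
  · -- m = 0 forces n = 0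
    have hn : n = 0 := by
      have h1 := (ctrbMat Aᵀ Cᵀ n).rank_le_card_width
      rw [hobs'] at h1
      subst hm
      simpa using h1
    subst hm hn
    have h1 := (ctrbMat (fromBlocks Aᵀ Cᵀ 0 0) (fromRows (0 : Matrix (Fin 0) (Fin 0) ℝ) 1)
      (0 + 0)).rank_le_card_height
    simp at h1
    simpa using h1
  · set T : Matrix (Fin n ⊕ Fin m) (Fin n ⊕ Fin m) ℝ := fromBlocks Aᵀ Cᵀ 0 0 with hT
    set Bt : Matrix (Fin n ⊕ Fin m) (Fin m) ℝ := fromRows 0 1 with hB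
    have hpow : ∀ k : ℕ, T ^ (k + 1) * Bt = fromRows ((Aᵀ) ^ k * Cᵀ) 0 := by
      intro k
      induction k with
      | zero => simp [hT, hB, pow_one, fromBlocks_mul_fromRows]
      | succ k ih =>
        rw [pow_succ', Matrix.mul_assoc, ih, hT, fromBlocks_mul_fromRows]
        rw [Matrix.mul_zero, add_zero, Matrix.zero_mul, Matrix.zero_mul, add_zero,
          ← Matrix.mul_assoc, ← pow_succ']
    refine ((rank_eq_card_iff_surj _).2 ?_).trans (by simp)
    have hs := (rank_eq_card_iff_surj (ctrbMat Aᵀ Cᵀ n)).1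
      (hobs'.trans (Fintype.card_fin n).symm)
    intro y
    obtain ⟨u, hu⟩ := hs (fun i => y (Sum.inl i))
    set F : ℕ → Fin m → ℝ := fun k j =>
      if k = 0 then y (Sum.inr j) else if h : k - 1 < n then u (⟨k - 1, h⟩, j) else 0 with hF
    refine ⟨fun p => F (p.1 : ℕ) p.2, ?_⟩
    obtain ⟨N, hN⟩ : ∃ N, n + m = N + 1 := ⟨n + m - 1, by omega⟩
    funext i
    have key : (ctrbMat T Bt (n + m)).mulVecLin (fun p => F (p.1 : ℕ) p.2) i
        = ∑ k ∈ Finset.range (n + m), ∑ j : Fin m, (T ^ k * Bt) i j * F k j := by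
      rw [mulVecLin_apply]
      show ∑ p : Fin (n + m) × Fin m, (ctrbMat T Bt (n+m)) i p * F (p.1 : ℕ) p.2 = _
      rw [Fintype.sum_prod_type]
      rw [← Fin.sum_univ_eq_sum_range (fun k => ∑ j : Fin m, (T ^ k * Bt) i j * F k j) (n + m)]
      rfl
    rw [key]
    cases i with
    | inr b =>
      rw [hN, Finset.sum_range_succ']
      have hz : ∀ k ∈ Finset.range N,
          ∑ j : Fin m, (T ^ (k+1) * Bt) (Sum.inr b) j * F (k+1) j = 0 := by
        intro k _
        rw [hpow k]
        simp [fromRows_apply_inr]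
      rw [Finset.sum_congr rfl hz]
      simp [hB, hF, one_apply, fromRows_apply_inr]
    | inl a =>
      rw [hN, Finset.sum_range_succ']
      have h0 : ∑ j : Fin m, ((T ^ 0 * Bt : Matrix (Fin n ⊕ Fin m) (Fin m) ℝ))
          (Sum.inl a) j * F 0 j = 0 := by
        simp [hB, fromRows_apply_inl]
      rw [h0, add_zero]
      have hterm : ∀ k, ∑ j : Fin m, (T ^ (k+1) * Bt) (Sum.inl a) j * F (k+1) j
          = ∑ j : Fin m, ((Aᵀ) ^ k * Cᵀ) a j * (if h : k < n then u (⟨k, h⟩, j) else 0) := by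
        intro k
        rw [hpow k]
        simp only [fromRows_apply_inl, hF, Nat.succ_ne_zero, if_false, Nat.add_sub_cancel]
      have hNn : n ≤ N := by omega
      calc ∑ k ∈ Finset.range N, ∑ j : Fin m, (T ^ (k+1) * Bt) (Sum.inl a) j * F (k+1) j
          = ∑ k ∈ Finset.range N, ∑ j : Fin m, ((Aᵀ) ^ k * Cᵀ) a j *
              (if h : k < n then u (⟨k, h⟩, j) else 0) :=
            Finset.sum_congr rfl fun k _ => hterm k
        _ = ∑ k ∈ Finset.range n, ∑ j : Fin m, ((Aᵀ) ^ k * Cᵀ) a j *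
              (if h : k < n then u (⟨k, h⟩, j) else 0) := by
            refine (Finset.sum_subset (Finset.range_subset_range.2 hNn) ?_).symm
            intro k _ hk
            simp only [Finset.mem_range] at hk
            simp [hk]
        _ = ∑ k : Fin n, ∑ j : Fin m, ((Aᵀ) ^ (k : ℕ) * Cᵀ) a j *
              (if h : (k : ℕ) < n then u (⟨(k : ℕ), h⟩, j) else 0) :=
            (Fin.sum_univ_eq_sum_range (fun k => ∑ j : Fin m, ((Aᵀ) ^ k * Cᵀ) a j *
              (if h : k < n then u (⟨k, h⟩, j) else 0)) n).symm
        _ = y (Sum.inl a) := by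
            rw [← congrFun hu a, mulVecLin_apply]
            show _ = ∑ p : Fin n × Fin m, (ctrbMat Aᵀ Cᵀ n) a p * u p
            rw [Fintype.sum_prod_type]
            refine Finset.sum_congr rfl fun k _ => Finset.sum_congr rfl fun j _ => ?_
            simp [ctrbMat]
end
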